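/- arXiv:2403.18513 — 12 statements merged into one kernel-verified Lean document; each statement's English description precedes it below -/
import Mathlib

section
/- Let P = (v_0, v_1, ..., v_k) be a fastest temporal path in a Δ-periodic temporal graph (G, λ, Δ). Then the duration of P equals 1 plus the sum over i from 1 to k-1 of the travel delays τ_{v_i}^{v_{i-1}, v_{i+1}}. -/
/-- Travel delay at a middle vertex: first edge has label `a`, second edge has label `b`. -/
def tdelay (Δ a b : ℤ) : ℤ := if a < b then b - a else b - a + Δ

/-- The set of durations of temporal paths along a fixed path with `k+1` edges whose
`Δ`-periodic labels are `lab 0, ..., lab k`: edge `i` is traversed at a time `t i` of the form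
`lab i + m·Δ` with `m ≥ 0`, the traversal times strictly increase along the path, and the
duration is `t (last) - t 0 + 1`. -/
def durations (Δ : ℤ) {k : ℕ} (lab : Fin (k + 1) → ℤ) : Set ℤ :=
  {d | ∃ t : Fin (k + 1) → ℤ, StrictMono t ∧ (∀ i, lab i ≤ t i ∧ Δ ∣ t i - lab i) ∧
        d = t (Fin.last k) - t 0 + 1}


lemma tdelay_pos (Δ a b : ℤ) (hΔ : 1 ≤ Δ) (ha : a ∈ Set.Icc 1 Δ) (hb : b ∈ Set.Icc 1 Δ) :
    1 ≤ tdelay Δ a b := by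
  obtain ⟨ha1, ha2⟩ := ha; obtain ⟨hb1, hb2⟩ := hb
  unfold tdelay; split <;> omega

lemma tdelay_le (Δ a b : ℤ) (hΔ : 1 ≤ Δ) (ha : a ∈ Set.Icc 1 Δ) (hb : b ∈ Set.Icc 1 Δ) :
    tdelay Δ a b ≤ Δ := by
  obtain ⟨ha1, ha2⟩ := ha; obtain ⟨hb1, hb2⟩ := hb
  unfold tdelay; split <;> omega

lemma tdelay_dvd (Δ a b : ℤ) : Δ ∣ tdelay Δ a b - (b - a) := by
  unfold tdelay; split
  · simp
  · ring_nf; simp [dvd_refl]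

lemma tdelay_min (Δ a b d : ℤ) (hΔ : 1 ≤ Δ) (ha : a ∈ Set.Icc 1 Δ) (hb : b ∈ Set.Icc 1 Δ)
    (hd : 0 < d) (hdvd : Δ ∣ d - (b - a)) : tdelay Δ a b ≤ d := by
  obtain ⟨m, hm⟩ := hdvd
  obtain ⟨ha1, ha2⟩ := ha; obtain ⟨hb1, hb2⟩ := hb
  have htd := tdelay_le Δ a b hΔ ⟨ha1, ha2⟩ ⟨hb1, hb2⟩
  have h1 := tdelay_pos Δ a b hΔ ⟨ha1, ha2⟩ ⟨hb1, hb2⟩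
  obtain ⟨m', hm'⟩ := tdelay_dvd Δ a b
  -- d = tdelay + (m - m') * Δ
  have key : d = tdelay Δ a b + (m - m') * Δ := by linarith [hm, hm', mul_comm Δ m, mul_comm Δ m']
  by_contra hlt
  push_neg at hlt
  have : (m - m') * Δ < 0 := by linarith
  have hmneg : m - m' ≤ -1 := by nlinarith
  have : (m - m') * Δ ≤ -1 * Δ := by
    apply mul_le_mul_of_nonneg_right hmneg (by linarith)
  linarith

/-- the duration of a fastest temporal path `P = (v_0,...,v_{k+1})` (with `k+1`
edges, labeled `lab`) equals `1` plus the sum of the travel delays at the internal vertices;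
i.e. this value is the least element of the set of durations of temporal paths along `P`. -/
theorem fastest_duration_eq_one_add_sum_delays (Δ : ℤ) (hΔ : 1 ≤ Δ) (k : ℕ)
    (lab : Fin (k + 1) → ℤ) (hlab : ∀ i, lab i ∈ Set.Icc 1 Δ) :
    IsLeast (durations Δ lab)
      (1 + ∑ i : Fin k, tdelay Δ (lab i.castSucc) (lab i.succ)) := by
  set L : ℕ → ℤ := fun n => lab ⟨min n k, by omega⟩ with hL
  have hLval : ∀ i : Fin (k+1), L i.val = lab i := by
    intro i
    have : min i.val k = i.val := by omega
    simp [hL, this]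
  have hLmem : ∀ n, L n ∈ Set.Icc 1 Δ := fun n => hlab _
  have hsum : (∑ i : Fin k, tdelay Δ (lab i.castSucc) (lab i.succ)) =
      ∑ j ∈ Finset.range k, tdelay Δ (L j) (L (j+1)) := by
    rw [← Fin.sum_univ_eq_sum_range]
    apply Finset.sum_congr rfl
    intro i _
    have h1 : L i.val = lab i.castSucc := by
      exact congrArg lab (Fin.ext (by simp only [Fin.coe_castSucc]; omega))
    have h2 : L (i.val + 1) = lab i.succ := by
      exact congrArg lab (Fin.ext (by simp only [Fin.val_succ]; omega))
    rw [h1, h2]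
  constructor
  · -- membership: construct canonical t
    set T : ℕ → ℤ := fun n => L 0 + ∑ j ∈ Finset.range n, tdelay Δ (L j) (L (j+1)) with hT
    have hTmono : ∀ m n, m < n → T m < T n := by
      intro m n hmn
      have : ∑ j ∈ Finset.range m, tdelay Δ (L j) (L (j+1)) <
          ∑ j ∈ Finset.range n, tdelay Δ (L j) (L (j+1)) := by
        apply Finset.sum_lt_sum_of_subset (Finset.range_subset_range.2 (le_of_lt hmn))
          (i := m) (by simp [hmn]) (by simp)
        · exact lt_of_lt_of_le one_pos (tdelay_pos Δ _ _ hΔ (hLmem m) (hLmem (m+1)))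
        · intro j _ _
          exact le_trans one_pos.le (tdelay_pos Δ _ _ hΔ (hLmem j) (hLmem (j+1)))
      simpa [hT] using this
    have hTinv : ∀ n ≤ k, L n ≤ T n ∧ Δ ∣ T n - L n := by
      intro n hn
      induction n with
      | zero => simp [hT]
      | succ m ih =>
        obtain ⟨h1, h2⟩ := ih (by omega)
        have hstep : T (m+1) = T m + tdelay Δ (L m) (L (m+1)) := by
          simp [hT, Finset.sum_range_succ]; ring
        constructor
        · have hd := tdelay_dvd Δ (L m) (L (m+1))
          obtain ⟨c, hc⟩ := hd
          have hc' : c ≥ 0 := by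
            have h1' := tdelay_pos Δ (L m) (L (m+1)) hΔ (hLmem m) (hLmem (m+1))
            have h2' := tdelay_le Δ (L m) (L (m+1)) hΔ (hLmem m) (hLmem (m+1))
            have hm1 := hLmem m; have hm2 := hLmem (m+1)
            simp [Set.mem_Icc] at hm1 hm2
            nlinarith
          have : Δ * c ≥ 0 := mul_nonneg (by linarith) hc'
          rw [hstep]; linarith
        · rw [hstep]
          have : T m + tdelay Δ (L m) (L (m+1)) - L (m+1) =
              (T m - L m) + (tdelay Δ (L m) (L (m+1)) - (L (m+1) - L m)) := by ring
          rw [this]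
          exact dvd_add h2 (tdelay_dvd Δ _ _)
    refine ⟨fun i => T i.val, ?_, ?_, ?_⟩
    · intro i j hij
      exact hTmono i.val j.val hij
    · intro i
      have := hTinv i.val (by omega)
      rwa [hLval] at this
    · simp only [Fin.val_last, Fin.val_zero, hT]
      simp [hsum]
      ring
  · -- lower bound
    rintro d ⟨t, hmono, hprop, rfl⟩
    set f : ℕ → ℤ := fun n => t ⟨min n k, by omega⟩ with hf
    have htele : ∑ j ∈ Finset.range k, (f (j+1) - f j) = f k - f 0 :=
      Finset.sum_range_sub f k
    have hfk : f k = t (Fin.last k) := by simp [hf, Fin.last]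
    have hf0 : f 0 = t 0 := by
      simp [hf]
    have hterm : ∀ j ∈ Finset.range k, tdelay Δ (L j) (L (j+1)) ≤ f (j+1) - f j := by
      intro j hj
      simp only [Finset.mem_range] at hj
      set i1 : Fin (k+1) := ⟨j, by omega⟩
      set i2 : Fin (k+1) := ⟨j+1, by omega⟩
      have hfj : f j = t i1 := by
        simp [hf, i1]
        congr 1
        exact Fin.ext (by simp; omega)
      have hfj1 : f (j+1) = t i2 := by
        simp [hf, i2]
        congr 1
        exact Fin.ext (by simp; omega)
      have hL1 : L j = lab i1 := by
        have := hLval i1; simpa using this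
      have hL2 : L (j+1) = lab i2 := by
        have := hLval i2; simpa using this
      rw [hfj, hfj1, hL1, hL2]
      apply tdelay_min Δ _ _ _ hΔ (hlab i1) (hlab i2)
      · have : t i1 < t i2 := hmono (by simp [i1, i2, Fin.lt_def])
        linarith
      · obtain ⟨h1, h2⟩ := hprop i1
        obtain ⟨h3, h4⟩ := hprop i2
        have : t i2 - t i1 - (lab i2 - lab i1) = (t i2 - lab i2) - (t i1 - lab i1) := by ring
        rw [this]
        exact dvd_sub h4 h2
    have : ∑ j ∈ Finset.range k, tdelay Δ (L j) (L (j+1)) ≤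
        ∑ j ∈ Finset.range k, (f (j+1) - f j) := Finset.sum_le_sum hterm
    rw [htele, hfk, hf0] at this
    rw [hsum]
    linarith
end

section
/- Let G be a tree, (G,λ) a Δ-periodic temporal graph, P_{s,t} a fastest temporal path from s to t with k edges (k ≥ 1), and P_{t,s} a fastest temporal path from t to s. Then d(P_{s,t}) + d(P_{t,s}) ≥ (k-1)·Δ + 2, where d denotes duration. -/
/-!
A temporal path along the labels `lab 0, …, lab k` spends at least `tdelay Δ (lab i) (lab (i+1))`
between its `i`-th and `(i+1)`-st edge, since that is the least positive waiting time compatible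
with the two labels modulo `Δ`; so every duration is at least `1 + ∑ᵢ tdelay`. Traversing the
path backwards swaps the arguments of each delay, and `tdelay Δ a b + tdelay Δ b a ≥ Δ`
(it equals `Δ` or `2Δ`), so the two lower bounds add up to at least `k Δ + 2`.
-/

theorem Fin.sum_succ_sub_castSucc {M : Type*} [AddCommGroup M] {k : ℕ} (f : Fin (k + 1) → M) :
    ∑ i : Fin k, (f i.succ - f i.castSucc) = f (Fin.last k) - f 0 := by
  induction k with
  | zero => simp
  | succ k ih =>
    simp only [Fin.sum_univ_castSucc, Fin.succ_castSucc, ih (fun i => f i.castSucc),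
      Fin.succ_last, Fin.castSucc_zero]
    abel

lemma tdelay_le_of_dvd_sub {Δ a b x : ℤ} (ha : a ∈ Set.Icc 1 Δ) (hb : b ∈ Set.Icc 1 Δ)
    (hx : 0 < x) (hdvd : Δ ∣ x - (b - a)) : tdelay Δ a b ≤ x := by
  obtain ⟨ha₁, ha₂⟩ := ha
  obtain ⟨hb₁, hb₂⟩ := hb
  obtain ⟨m, hm⟩ := hdvd
  unfold tdelay
  split_ifs with hab
  · have hm₀ : 0 ≤ m := by
      by_contra! hneg
      nlinarith
    nlinarith
  · have hm₁ : 1 ≤ m := by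
      by_contra! hle
      nlinarith
    nlinarith

lemma le_tdelay_add_tdelay {Δ : ℤ} (hΔ : 0 ≤ Δ) (a b : ℤ) :
    Δ ≤ tdelay Δ a b + tdelay Δ b a := by
  unfold tdelay
  split_ifs <;> omega

def delaySum (Δ : ℤ) {k : ℕ} (lab : Fin (k + 1) → ℤ) : ℤ :=
  ∑ i : Fin k, tdelay Δ (lab i.castSucc) (lab i.succ)

lemma one_add_delaySum_le {Δ : ℤ} {k : ℕ} {lab : Fin (k + 1) → ℤ}
    (hlab : ∀ i, lab i ∈ Set.Icc 1 Δ) {d : ℤ} (hd : d ∈ durations Δ lab) :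
    1 + delaySum Δ lab ≤ d := by
  obtain ⟨t, ht_mono, ht_lab, rfl⟩ := hd
  have hstep : ∀ i : Fin k,
      tdelay Δ (lab i.castSucc) (lab i.succ) ≤ t i.succ - t i.castSucc := fun i =>
    tdelay_le_of_dvd_sub (hlab _) (hlab _) (sub_pos.mpr (ht_mono i.castSucc_lt_succ)) <| by
      simpa only [sub_sub_sub_comm] using dvd_sub (ht_lab i.succ).2 (ht_lab i.castSucc).2
  have htotal := Finset.sum_le_sum fun i (_ : i ∈ Finset.univ) => hstep i
  rw [Fin.sum_succ_sub_castSucc] at htotal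
  unfold delaySum
  linarith

lemma delaySum_comp_rev (Δ : ℤ) {k : ℕ} (lab : Fin (k + 1) → ℤ) :
    delaySum Δ (lab ∘ Fin.rev) = ∑ i : Fin k, tdelay Δ (lab i.succ) (lab i.castSucc) := by
  rw [delaySum, ← Equiv.sum_comp Fin.revPerm]
  simp [Fin.rev_castSucc, Fin.rev_succ]

lemma mul_le_delaySum_add_delaySum_rev {Δ : ℤ} (hΔ : 0 ≤ Δ) {k : ℕ} (lab : Fin (k + 1) → ℤ) :
    k * Δ ≤ delaySum Δ lab + delaySum Δ (lab ∘ Fin.rev) := by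
  rw [delaySum_comp_rev, delaySum, ← Finset.sum_add_distrib]
  calc (k : ℤ) * Δ = ∑ _i : Fin k, Δ := by simp
    _ ≤ _ := Finset.sum_le_sum fun i _ => le_tdelay_add_tdelay hΔ _ _

theorem duration_sum_lower_bound_general (Δ : ℤ) (k : ℕ)
    (lab : Fin (k + 1) → ℤ) (hlab : ∀ i, lab i ∈ Set.Icc 1 Δ) (d₁ d₂ : ℤ)
    (h₁ : IsLeast (durations Δ lab) d₁)
    (h₂ : IsLeast (durations Δ (lab ∘ Fin.rev)) d₂) :
    (k : ℤ) * Δ + 2 ≤ d₁ + d₂ := by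
  have hΔ : 0 ≤ Δ := by linarith [(hlab 0).1, (hlab 0).2]
  have forward := one_add_delaySum_le hlab h₁.1
  have backward := one_add_delaySum_le (lab := lab ∘ Fin.rev) (fun i => hlab _) h₂.1
  have paired := mul_le_delaySum_add_delaySum_rev hΔ lab
  linarith

/-- if `P_{s,t}` is the (unique) path with `k+1` edges from `s` to `t` in a tree,
with edge labels `lab` (in order from `s` to `t`), `d₁` is the duration of a fastest temporal
path from `s` to `t` and `d₂` the duration of a fastest temporal path from `t` to `s` (along
the reversed edge-label sequence), then `d₁ + d₂ ≥ ((k+1)-1)·Δ + 2`. -/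
theorem duration_sum_lower_bound (Δ : ℤ) (hΔ : 1 ≤ Δ) (k : ℕ)
    (lab : Fin (k + 1) → ℤ) (hlab : ∀ i, lab i ∈ Set.Icc 1 Δ) (d₁ d₂ : ℤ)
    (h₁ : IsLeast (durations Δ lab) d₁)
    (h₂ : IsLeast (durations Δ (lab ∘ Fin.rev)) d₂) :
    (k : ℤ) * Δ + 2 ≤ d₁ + d₂ :=
  duration_sum_lower_bound_general Δ k lab hlab d₁ d₂ h₁ h₂
end

section
/- Let G be a graph and χ: V(G) → {1,...,Δ} a proper Δ-coloring (Δ ≥ 2). Construct the star G' with center c and leaves V(G), and label each edge {c,v} with χ(v). Then for every edge {u,v} of G, the unique temporal path (u,c,v) in the Δ-periodic temporal graph (G',λ,Δ) has duration at most Δ. -/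
/-- let `χ` be a proper `Δ`-coloring of `G` (`Δ ≥ 2`). In the star with center `c`
and leaves `V(G)`, label edge `{c,v}` with `χ v`. Then for every edge `{u,v}` of `G`, the unique
temporal path `(u,c,v)` has duration `1 + τ_c^{u,v} = 1 + tdelay Δ (χ u) (χ v)`, which is at
most `Δ`. -/
theorem star_coloring_duration_le {V : Type*} (G : SimpleGraph V) (Δ : ℤ) (hΔ : 2 ≤ Δ)
    (χ : V → ℤ) (hrange : ∀ v, χ v ∈ Set.Icc 1 Δ)
    (hproper : ∀ u v, G.Adj u v → χ u ≠ χ v) :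
    ∀ u v, G.Adj u v → 1 + tdelay Δ (χ u) (χ v) ≤ Δ := by
  intro u v h
  have hu := hrange u
  have hv := hrange v
  have hne := hproper u v h
  simp [Set.mem_Icc] at hu hv
  unfold tdelay
  split <;> omega
end

section
/- Let G' be a star with center c and leaves V, and let λ be a Δ-periodic labeling of G'. If for every edge {u,v} ∈ E of a graph G = (V,E) the fastest temporal path from u to v in (G',λ,Δ) has duration at most Δ, then the map χ(v) := λ({c,v}) is a proper coloring of G with at most Δ colors. -/
/-- let `G'` be the star with center `c` and leaves `V`, labeled by
`lab v = λ({c,v}) ∈ {1,...,Δ}`. The fastest temporal path from leaf `u` to leaf `v` has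
duration `1 + tdelay Δ (lab u) (lab v)`. If for every edge `{u,v}` of `G` this duration is at
most `Δ`, then `v ↦ λ({c,v})` is a proper coloring of `G` with at most `Δ` colors. -/
theorem star_duration_to_coloring {V : Type*} (G : SimpleGraph V) (Δ : ℤ) (hΔ : 1 ≤ Δ)
    (lab : V → ℤ) (hrange : ∀ v, lab v ∈ Set.Icc 1 Δ)
    (hdur : ∀ u v, G.Adj u v → 1 + tdelay Δ (lab u) (lab v) ≤ Δ) :
    ∀ u v, G.Adj u v → lab u ≠ lab v := by
  intro u v huv heq
  have h := hdur u v huv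
  simp [tdelay, heq] at h
end

section
/- A graph G is Δ-colorable (Δ ≥ 3) if and only if the star with center c and leaves V(G) admits a Δ-periodic labeling λ such that for every edge {u,v} of G, the duration of the fastest temporal path from u to v in the labeled star is at most Δ. -/
lemma tdelay_le_iff (Δ a b : ℤ) (ha : a ∈ Set.Icc 1 Δ) (hb : b ∈ Set.Icc 1 Δ) :
    1 + tdelay Δ a b ≤ Δ ↔ a ≠ b := by
  obtain ⟨ha1, ha2⟩ := ha
  obtain ⟨hb1, hb2⟩ := hb
  unfold tdelay
  rcases lt_trichotomy a b with h | h | h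
  · simp [h]; constructor <;> intro <;> omega
  · subst h; rw [if_neg (lt_irrefl a)]; simp only [ne_eq, not_true_eq_false, iff_false, not_le]; omega
  · rw [if_neg (by omega)]; constructor <;> intro <;> omega

/-- for `Δ ≥ 3`, a graph `G` is `Δ`-colorable iff the star with center `c` and
leaves `V(G)` admits a `Δ`-periodic labeling `lab` (where `lab v = λ({c,v})`) such that for
every edge `{u,v}` of `G` the fastest temporal path from `u` to `v`, whose duration is
`1 + tdelay Δ (lab u) (lab v)`, has duration at most `Δ`. -/
theorem delta_colorable_iff_star_labeling {V : Type*} (G : SimpleGraph V) (Δ : ℤ)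
    (hΔ : 3 ≤ Δ) :
    (∃ χ : V → ℤ, (∀ v, χ v ∈ Set.Icc 1 Δ) ∧ ∀ u v, G.Adj u v → χ u ≠ χ v) ↔
      (∃ lab : V → ℤ, (∀ v, lab v ∈ Set.Icc 1 Δ) ∧
        ∀ u v, G.Adj u v → 1 + tdelay Δ (lab u) (lab v) ≤ Δ) := by
  constructor
  · rintro ⟨χ, hmem, hne⟩
    exact ⟨χ, hmem, fun u v h => (tdelay_le_iff Δ _ _ (hmem u) (hmem v)).2 (hne u v h)⟩
  · rintro ⟨lab, hmem, hle⟩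
    exact ⟨lab, hmem, fun u v h => (tdelay_le_iff Δ _ _ (hmem u) (hmem v)).1 (hle u v h)⟩
end

section
/- Let G be a tree, λ a Δ-periodic labeling of G, and v a degree-2 vertex of G with neighbors u and w such that λ({u,v}) = λ({v,w}). Define λ' by cyclically shifting (adding 1 modulo Δ, mapping Δ to 1) the labels of all edges in the subtree of G containing u obtained by deleting v, including the edge {u,v}, and leaving all other labels unchanged. Then all travel delays at vertices other than v are unchanged, and both travel delays τ_v^{u,w} and τ_v^{w,u} strictly decrease. -/
open Classical

private lemma tdelay_shift (Δ a b : ℤ) (ha : 1 ≤ a) (haΔ : a ≤ Δ) (hb : 1 ≤ b) (hbΔ : b ≤ Δ) :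
    tdelay Δ (if a = Δ then 1 else a + 1) (if b = Δ then 1 else b + 1) = tdelay Δ a b := by
  unfold tdelay; split_ifs <;> omega

/-- let `G` be a tree with `Δ`-periodic labeling `lab` (symmetric, labels in
`{1,...,Δ}`), and let `v` be a degree-2 vertex with neighbors `u, w` such that
`λ({u,v}) = λ({v,w})`. Let `lab'` be obtained by cyclically shifting (adding 1, mapping `Δ`
to `1`) the labels of all edges of the subtree of `G - v` containing `u` (an edge lies in that
subtree iff both its endpoints can reach `u` avoiding `v`) together with the edge `{u,v}`, all
other labels unchanged. Then every travel delay at a vertex other than `v` is unchanged, while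
the travel delays `τ_v^{u,w}` and `τ_v^{w,u}` both strictly decrease. -/
theorem shift_subtree_delays {V : Type*} (G : SimpleGraph V) (hT : G.IsTree)
    (Δ : ℤ) (hΔ : 2 ≤ Δ) (lab : V → V → ℤ)
    (hsym : ∀ x y, lab x y = lab y x)
    (hrange : ∀ x y, G.Adj x y → lab x y ∈ Set.Icc 1 Δ)
    (v u w : V) (hu : G.Adj v u) (hw : G.Adj v w) (huw : u ≠ w)
    (hdeg2 : ∀ x, G.Adj v x → x = u ∨ x = w)
    (heq : lab v u = lab v w)
    (lab' : V → V → ℤ)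
    (hlab' : ∀ x y, lab' x y =
      if ((∃ p : G.Walk x u, v ∉ p.support) ∧ (∃ p : G.Walk y u, v ∉ p.support)) ∨
          (x = u ∧ y = v) ∨ (x = v ∧ y = u)
        then (if lab x y = Δ then 1 else lab x y + 1)
        else lab x y) :
    (∀ x a b, x ≠ v → G.Adj x a → G.Adj x b →
        tdelay Δ (lab' x a) (lab' x b) = tdelay Δ (lab x a) (lab x b)) ∧
      tdelay Δ (lab' v u) (lab' v w) < tdelay Δ (lab v u) (lab v w) ∧
      tdelay Δ (lab' v w) (lab' v u) < tdelay Δ (lab v w) (lab v u) := by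
  have hvu : v ≠ u := hu.ne
  have hvw : v ≠ w := hw.ne
  have hRuu : ∃ p : G.Walk u u, v ∉ p.support :=
    ⟨SimpleGraph.Walk.nil, by simp [hvu]⟩
  have hRv : ¬ ∃ p : G.Walk v u, v ∉ p.support := by
    rintro ⟨p, hp⟩; exact hp p.start_mem_support
  have hRw : ¬ ∃ p : G.Walk w u, v ∉ p.support := by
    rintro ⟨p, hp⟩
    have hq : (p.toPath : G.Walk w u).IsPath := p.toPath.2
    have hqv : v ∉ (p.toPath : G.Walk w u).support :=
      fun h => hp (SimpleGraph.Walk.support_toPath_subset p h)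
    have h1 : (SimpleGraph.Walk.cons hw (p.toPath : G.Walk w u)).IsPath := hq.cons hqv
    have h2 : (SimpleGraph.Walk.cons hu (SimpleGraph.Walk.nil : G.Walk u u)).IsPath :=
      SimpleGraph.Walk.IsPath.nil.cons (by simp [hvu])
    obtain ⟨P, _, hP⟩ := hT.existsUnique_path v u
    have heqw := (hP _ h1).trans (hP _ h2).symm
    have hmem : w ∈ (SimpleGraph.Walk.cons hu (SimpleGraph.Walk.nil : G.Walk u u)).support := by
      rw [← heqw]; simp
    simp only [SimpleGraph.Walk.support_cons, SimpleGraph.Walk.support_nil,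
      List.mem_cons, List.mem_singleton] at hmem
    rcases hmem with h | h | h
    · exact hvw h.symm
    · exact huw h.symm
    · simp at h
  have hstep : ∀ x a, (∃ p : G.Walk x u, v ∉ p.support) → G.Adj x a → a ≠ v →
      ∃ p : G.Walk a u, v ∉ p.support := by
    rintro x a ⟨p, hp⟩ hadj hav
    exact ⟨SimpleGraph.Walk.cons hadj.symm p, by simp [Ne.symm hav, hp]⟩
  have hcond : ∀ x a, x ≠ v → G.Adj x a →
      ((((∃ p : G.Walk x u, v ∉ p.support) ∧ (∃ p : G.Walk a u, v ∉ p.support)) ∨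
        (x = u ∧ a = v) ∨ (x = v ∧ a = u)) ↔ (∃ p : G.Walk x u, v ∉ p.support)) := by
    intro x a hxv hadj
    constructor
    · rintro (⟨h1, _⟩ | ⟨h1, _⟩ | ⟨h1, _⟩)
      · exact h1
      · exact h1 ▸ hRuu
      · exact absurd h1 hxv
    · intro hx
      by_cases hav : a = v
      · subst hav
        rcases hdeg2 x hadj.symm with h | h
        · exact Or.inr (Or.inl ⟨h, rfl⟩)
        · exact absurd (h ▸ hx) hRw
      · exact Or.inl ⟨hx, hstep x a hx hadj hav⟩
  have hlvu : lab' v u = if lab v u = Δ then 1 else lab v u + 1 := by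
    rw [hlab' v u, if_pos (Or.inr (Or.inr ⟨rfl, rfl⟩))]
  have hlvw : lab' v w = lab v w := by
    rw [hlab' v w, if_neg]
    rintro (⟨h1, _⟩ | ⟨h1, _⟩ | ⟨_, h2⟩)
    · exact hRv h1
    · exact hvu h1
    · exact huw h2.symm
  obtain ⟨hL1, hL2⟩ := Set.mem_Icc.mp (hrange v u hu)
  refine ⟨?_, ?_, ?_⟩
  · intro x a b hxv hxa hxb
    rw [hlab' x a, hlab' x b]
    by_cases hx : ∃ p : G.Walk x u, v ∉ p.support
    · rw [if_pos ((hcond x a hxv hxa).mpr hx), if_pos ((hcond x b hxv hxb).mpr hx)]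
      obtain ⟨h1, h2⟩ := Set.mem_Icc.mp (hrange x a hxa)
      obtain ⟨h3, h4⟩ := Set.mem_Icc.mp (hrange x b hxb)
      exact tdelay_shift Δ _ _ h1 h2 h3 h4
    · rw [if_neg (fun h => hx ((hcond x a hxv hxa).mp h)),
          if_neg (fun h => hx ((hcond x b hxv hxb).mp h))]
  · rw [hlvu, hlvw, ← heq]; unfold tdelay; split_ifs <;> omega
  · rw [hlvu, hlvw, ← heq]; unfold tdelay; split_ifs <;> omega
end

section
/- Let (G,D,Δ) be a yes-instance of the periodic upper-bounded temporal tree realization problem on a tree G, let λ be a solution, and let P = (v_0,...,v_k) with k > 1 be the unique path from s = v_0 to t = v_k in G. If D_{s,t} + D_{t,s} = (k-1)·Δ + 2, then λ({v_0,v_1}) ≡ λ({v_{k-1},v_k}) - D_{s,t} + 1 (mod Δ). -/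
/-- Sum of travel delays at internal vertices of a path given by its vertex list, where
`lab x y` is the (symmetric) label of edge `{x,y}`. -/
def listDelay {V : Type*} (Δ : ℤ) (lab : V → V → ℤ) : List V → ℤ
  | a :: b :: c :: rest => tdelay Δ (lab a b) (lab b c) + listDelay Δ lab (b :: c :: rest)
  | _ => 0

/-- A labeling realizes the upper-bound matrix `D` if for all vertices `s, t`, the duration of
the fastest temporal path from `s` to `t`, which in a tree equals `1` plus the sum of travel
delays along the unique `s`-`t` path, is at most `D s t`. -/
def Realizes {V : Type*} (G : SimpleGraph V) (Δ : ℤ) (lab : V → V → ℤ)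
    (D : V → V → ℤ) : Prop :=
  ∀ s t (p : G.Walk s t), p.IsPath → 1 + listDelay Δ lab p.support ≤ D s t

/-- Reverse delay, computed front-to-back. -/
def revDelay {V : Type*} (Δ : ℤ) (lab : V → V → ℤ) : List V → ℤ
  | a :: b :: c :: rest => tdelay Δ (lab c b) (lab b a) + revDelay Δ lab (b :: c :: rest)
  | _ => 0

/-- Label of the last edge of the list `a :: b :: l`. -/
def lastLab {V : Type*} (lab : V → V → ℤ) : V → V → List V → ℤ
  | a, b, [] => lab a b
  | _, b, c :: l => lastLab lab b c l

lemma tdelay_pair (Δ a b : ℤ) (hΔ : 0 ≤ Δ) : Δ ≤ tdelay Δ a b + tdelay Δ b a := by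
  unfold tdelay
  split <;> split <;> omega

lemma tdelay_modeq (Δ a b : ℤ) : tdelay Δ a b ≡ b - a [ZMOD Δ] := by
  unfold tdelay Int.ModEq
  split
  · rfl
  · simpa using Int.add_mul_emod_self_left (a := b - a) (b := Δ) (c := 1)

lemma listDelay_concat {V : Type*} (Δ : ℤ) (lab : V → V → ℤ) :
    ∀ (m : List V) (x y z : V),
      listDelay Δ lab (m ++ [x, y, z]) =
        listDelay Δ lab (m ++ [x, y]) + tdelay Δ (lab x y) (lab y z) := by
  intro m
  induction m with
  | nil => intro x y z; simp [listDelay]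
  | cons a m ih =>
    intro x y z
    match m with
    | [] => simp [listDelay]
    | [b] => simp [listDelay]; ring
    | b :: c :: m' =>
      have h := ih x y z
      simp only [List.cons_append, List.append_eq, listDelay] at *
      linarith

lemma listDelay_reverse {V : Type*} (Δ : ℤ) (lab : V → V → ℤ) :
    ∀ (l : List V), listDelay Δ lab l.reverse = revDelay Δ lab l
  | [] => by simp [listDelay, revDelay]
  | [a] => by simp [listDelay, revDelay]
  | [a, b] => by simp [listDelay, revDelay]
  | a :: b :: c :: rest => by
    have ih := listDelay_reverse Δ lab (b :: c :: rest)
    have h1 : (a :: b :: c :: rest).reverse = rest.reverse ++ [c, b, a] := by simp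
    have h2 : (b :: c :: rest).reverse = rest.reverse ++ [c, b] := by simp
    rw [h1, listDelay_concat, ← h2, ih]
    show _ = tdelay Δ (lab c b) (lab b a) + revDelay Δ lab (b :: c :: rest)
    ring
termination_by l => l.length

lemma pair_lower {V : Type*} (Δ : ℤ) (hΔ : 0 ≤ Δ) (lab : V → V → ℤ)
    (hsym : ∀ x y, lab x y = lab y x) :
    ∀ (l : List V), ((l.length : ℤ) - 2) * Δ ≤ listDelay Δ lab l + revDelay Δ lab l
  | [] => by simp [listDelay, revDelay]; nlinarith
  | [a] => by simp [listDelay, revDelay]; nlinarith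
  | [a, b] => by simp [listDelay, revDelay]
  | a :: b :: c :: rest => by
    have ih := pair_lower Δ hΔ lab hsym (b :: c :: rest)
    have hp := tdelay_pair Δ (lab a b) (lab b c) hΔ
    simp only [listDelay, revDelay, List.length_cons] at *
    rw [hsym c b, hsym b a]
    push_cast at *
    nlinarith [hp, ih]
termination_by l => l.length

lemma tele_list {V : Type*} (Δ : ℤ) (lab : V → V → ℤ) :
    ∀ (l : List V) (a b : V),
      listDelay Δ lab (a :: b :: l) ≡ lastLab lab a b l - lab a b [ZMOD Δ] := by
  intro l
  induction l with
  | nil => intro a b; simp [listDelay, lastLab]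
  | cons c rest ih =>
    intro a b
    have h1 := tdelay_modeq Δ (lab a b) (lab b c)
    have h2 := ih b c
    have := h1.add h2
    simp only [listDelay, lastLab]
    calc tdelay Δ (lab a b) (lab b c) + listDelay Δ lab (b :: c :: rest)
        ≡ (lab b c - lab a b) + (lastLab lab b c rest - lab b c) [ZMOD Δ] := this
      _ = lastLab lab b c rest - lab a b := by ring

lemma walk_lastLab {V : Type*} {G : SimpleGraph V} (lab : V → V → ℤ) :
    ∀ {u t : V} (q : G.Walk u t) (a : V),
      lastLab lab a u q.support.tail =
        if q.length = 0 then lab a u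
        else lab (q.getVert (q.length - 1)) (q.getVert q.length) := by
  intro u t q
  induction q with
  | nil => intro a; simp [lastLab]
  | @cons u w t h q' ih =>
    intro a
    have hsup : (SimpleGraph.Walk.cons h q').support.tail = w :: q'.support.tail := by
      rw [SimpleGraph.Walk.support_cons, SimpleGraph.Walk.support_eq_cons q']; rfl
    rw [hsup]
    simp only [lastLab]
    rw [ih u]
    by_cases h0 : q'.length = 0
    · simp [h0, SimpleGraph.Walk.length_cons, SimpleGraph.Walk.getVert_cons_succ]
    · obtain ⟨m, hm⟩ := Nat.exists_eq_succ_of_ne_zero h0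
      simp only [SimpleGraph.Walk.length_cons, h0, if_neg, hm]
      have : m + 1 + 1 - 1 = m + 1 := rfl
      simp [SimpleGraph.Walk.getVert_cons_succ, hm]

lemma walk_tele {V : Type*} {G : SimpleGraph V} (Δ : ℤ) (lab : V → V → ℤ)
    {s t : V} (p : G.Walk s t) (hlen : 1 ≤ p.length) :
    listDelay Δ lab p.support ≡
      lab (p.getVert (p.length - 1)) (p.getVert p.length) -
        lab (p.getVert 0) (p.getVert 1) [ZMOD Δ] := by
  cases p with
  | nil => simp at hlen
  | @cons s u t h q =>
    have hsup : (SimpleGraph.Walk.cons h q).support = s :: u :: q.support.tail := by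
      rw [SimpleGraph.Walk.support_cons, SimpleGraph.Walk.support_eq_cons q]; rfl
    rw [hsup]
    have h1 := tele_list Δ lab q.support.tail s u
    have h2 := walk_lastLab (G := G) lab q s
    rw [h2] at h1
    by_cases h0 : q.length = 0
    · rw [if_pos h0] at h1
      have e1 : (SimpleGraph.Walk.cons h q).length = 1 := by
        simp [SimpleGraph.Walk.length_cons, h0]
      rw [e1]
      simpa [SimpleGraph.Walk.getVert_cons_succ, SimpleGraph.Walk.getVert_zero] using h1
    · obtain ⟨m, hm⟩ := Nat.exists_eq_succ_of_ne_zero h0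
      rw [if_neg h0, hm] at h1
      simp only [Nat.succ_sub_one] at h1
      have e1 : (SimpleGraph.Walk.cons h q).length = m + 2 := by
        simp [SimpleGraph.Walk.length_cons, hm]
      rw [e1]
      simp only [show m + 2 - 1 = m + 1 from rfl, SimpleGraph.Walk.getVert_cons_succ,
        SimpleGraph.Walk.getVert_zero]
      exact h1

/-- let `lab` be a solution of a yes-instance `(G, D, Δ)` of TTR on a tree, and
let `P = (v_0,...,v_k)` with `k > 1` be the unique path from `s` to `t`. If
`D s t + D t s = (k-1)·Δ + 2`, then `λ({v_0,v_1}) ≡ λ({v_{k-1},v_k}) - D s t + 1 (mod Δ)`. -/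
theorem forcing_corollary {V : Type*} (G : SimpleGraph V) (hT : G.IsTree)
    (Δ : ℤ) (hΔ : 2 ≤ Δ) (D : V → V → ℤ) (hD : ∀ i j, 1 ≤ D i j)
    (lab : V → V → ℤ) (hsym : ∀ x y, lab x y = lab y x)
    (hrange : ∀ x y, G.Adj x y → lab x y ∈ Set.Icc 1 Δ)
    (hsol : Realizes G Δ lab D)
    (s t : V) (p : G.Walk s t) (hp : p.IsPath) (k : ℕ) (hk : p.length = k) (hk1 : 1 < k)
    (hDsum : D s t + D t s = ((k : ℤ) - 1) * Δ + 2) :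
    lab (p.getVert 0) (p.getVert 1) ≡
      lab (p.getVert (k - 1)) (p.getVert k) - D s t + 1 [ZMOD Δ] := by
  have h1 := hsol s t p hp
  have h2 := hsol t s p.reverse hp.reverse
  rw [SimpleGraph.Walk.support_reverse, listDelay_reverse] at h2
  have h3 := pair_lower Δ (by linarith) lab hsym p.support
  have hsl : (p.support.length : ℤ) = (k : ℤ) + 1 := by
    rw [SimpleGraph.Walk.length_support, hk]; push_cast; ring
  rw [hsl] at h3
  have heq : listDelay Δ lab p.support = D s t - 1 := by linarith
  have h4 := walk_tele Δ lab p (by omega)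
  rw [hk, heq] at h4
  set F := lab (p.getVert 0) (p.getVert 1) with hF
  set L := lab (p.getVert (k - 1)) (p.getVert k) with hL
  have h5 := (Int.ModEq.refl L).sub h4.symm
  calc F = L - (L - F) := by ring
    _ ≡ L - (D s t - 1) [ZMOD Δ] := h5
    _ = L - D s t + 1 := by ring
end

section
/- Let G be a tree with ℓ leaves, ℓ ≥ 2. Then the number of edges of G both of whose endpoints are internal (non-leaf) vertices is at most |V(G)| - ℓ - 1, and in particular the number of internal vertices is at most 2·vc(G), where vc(G) is the vertex cover number of G. -/
/-!
Every leaf lies on exactly one edge, and once some vertex has degree at least two no edge joins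
two leaves; so the leaves inject into the non-internal edges, and a tree has `|V| - 1` edges.

For the vertex cover bound, root the tree and call `p.snd`, for the path `p` to the root, the
parent of a vertex. An internal vertex has a neighbour other than its parent, which is therefore
its child. If the vertex lies outside a vertex cover `Y`, that child lies in `Y`; hence the internal
vertices outside `Y` are parents of vertices of `Y`, and there are at most `|Y|` of them.
-/

/-- The vertex cover number of a finite graph. -/
noncomputable def vcNum {V : Type*} [Fintype V] (G : SimpleGraph V) : ℕ :=
  sInf {n : ℕ | ∃ S : Finset V, (∀ e ∈ G.edgeSet, ∃ x ∈ S, x ∈ e) ∧ S.card = n}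

open Finset

namespace SimpleGraph

variable {V : Type*} {G : SimpleGraph V}

theorem IsAcyclic.eq_snd_or_eq_snd_of_adj (hG : G.IsAcyclic) {v w r : V} {p : G.Walk v r}
    {q : G.Walk w r} (hp : p.IsPath) (hq : q.IsPath) (hadj : G.Adj v w) :
    w = p.snd ∨ v = q.snd := by
  by_cases hw : w ∈ p.support
  · exact .inl (hG.eq_snd_of_adj_start hp hadj hw)
  · refine .inr (hG.eq_snd_of_adj_start hq hadj.symm ?_)
    simpa using hG.mem_support_of_ne_mem_support_of_adj_of_isPath hq.reverse hp.reverse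
      hadj.symm (by simpa using hw)

theorem IsAcyclic.exists_adj_snd_eq (hG : G.IsAcyclic) {r : V} {P : ∀ v, G.Walk v r}
    (hP : ∀ v, (P v).IsPath) {v : V} [Fintype (G.neighborSet v)] (hv : 2 ≤ G.degree v) :
    ∃ w, G.Adj v w ∧ (P w).snd = v := by
  classical
  obtain ⟨w, hw, hwp⟩ := exists_mem_ne (s := G.neighborFinset v) hv (P v).snd
  rw [mem_neighborFinset] at hw
  refine ⟨w, hw, ?_⟩
  rcases hG.eq_snd_or_eq_snd_of_adj (hP v) (hP w) hw with h | h
  · exact absurd h hwp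
  · exact h.symm

theorem Connected.eq_or_eq_of_adj_of_degree_eq_one (hG : G.Connected) {u v : V}
    [Fintype (G.neighborSet u)] [Fintype (G.neighborSet v)] (huv : G.Adj u v)
    (hu : G.degree u = 1) (hv : G.degree v = 1) (w : V) : w = u ∨ w = v := by
  by_contra hw
  obtain ⟨d, -, hd, hdw⟩ :=
    (hG.preconnected u w).some.exists_boundary_dart {u, v} (by simp) (by simpa using hw)
  have hnbr {x y : V} [Fintype (G.neighborSet x)] (hx : G.degree x = 1) (hxy : G.Adj x y) :
      d.fst = x → d.snd = y := fun h ↦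
    (degree_eq_one_iff_existsUnique_adj.1 hx).unique (h ▸ d.adj) hxy
  rcases hd with hd | hd
  · exact hdw (.inr (hnbr hu huv hd))
  · exact hdw (.inl (hnbr hv huv.symm hd))

variable [Fintype V] [DecidableRel G.Adj]

theorem Connected.card_leaves_le_card_edges_not_internal [DecidableEq V] (hG : G.Connected)
    {x : V} (hx : 2 ≤ G.degree x) :
    #{v | G.degree v = 1} ≤ #{e ∈ G.edgeFinset | ¬∀ y ∈ e, 2 ≤ G.degree y} := by
  refine card_le_card_of_forall_subsingleton (fun v e ↦ v ∈ e) ?_ ?_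
  · intro v hv
    rw [mem_filter] at hv
    obtain ⟨w, hw, -⟩ := degree_eq_one_iff_existsUnique_adj.1 hv.2
    refine ⟨s(v, w), ?_, Sym2.mem_mk_left v w⟩
    simp only [mem_filter, mem_edgeFinset, mem_edgeSet, not_forall]
    exact ⟨hw, v, Sym2.mem_mk_left v w, by omega⟩
  · intro e he a ha b hb
    simp only [Set.mem_ofPred_eq, mem_filter, mem_univ, true_and] at ha hb
    by_contra hab
    rw [(Sym2.mem_and_mem_iff hab).1 ⟨ha.2, hb.2⟩, mem_filter, mem_edgeFinset, mem_edgeSet] at he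
    rcases hG.eq_or_eq_of_adj_of_degree_eq_one he.1 ha.1 hb.1 x with rfl | rfl <;> omega

theorem IsTree.card_internal_edges_le (hG : G.IsTree) [DecidableEq V] :
    #{e ∈ G.edgeFinset | ∀ y ∈ e, 2 ≤ G.degree y} ≤
      Fintype.card V - #{v | G.degree v = 1} - 1 := by
  rcases eq_empty_or_nonempty {e ∈ G.edgeFinset | ∀ y ∈ e, 2 ≤ G.degree y} with h | ⟨e, he⟩
  · simp [h]
  have hleaves := hG.connected.card_leaves_le_card_edges_not_internal
    ((mem_filter.1 he).2 _ (Sym2.out_fst_mem e))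
  have hsplit := card_filter_add_card_filter_not
    (s := G.edgeFinset) (fun e ↦ ∀ y ∈ e, 2 ≤ G.degree y)
  have hedges := hG.card_edgeFinset
  omega

theorem IsTree.card_internal_sdiff_le (hG : G.IsTree) [DecidableEq V] {Y : Finset V}
    (hY : G.IsVertexCover Y) : #(({v | 2 ≤ G.degree v} : Finset V) \ Y) ≤ #Y := by
  obtain ⟨r⟩ := hG.connected.nonempty
  choose P hP using fun v ↦ hG.connected.preconnected.exists_isPath v r
  calc #(({v | 2 ≤ G.degree v} : Finset V) \ Y)
      ≤ #(Y.image fun w ↦ (P w).snd) := by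
        refine card_le_card fun v hv ↦ ?_
        simp only [mem_sdiff, mem_filter, mem_univ, true_and] at hv
        obtain ⟨w, hvw, hwv⟩ := hG.isAcyclic.exists_adj_snd_eq hP hv.1
        exact mem_image.2 ⟨w, (hY hvw).resolve_left hv.2, hwv⟩
    _ ≤ #Y := card_image_le

theorem IsTree.card_internal_le_two_mul (hG : G.IsTree) {Y : Finset V}
    (hY : G.IsVertexCover Y) : #{v | 2 ≤ G.degree v} ≤ 2 * #Y := by
  classical
  have := hG.card_internal_sdiff_le hY
  have := card_le_card_sdiff_add_card (s := {v | 2 ≤ G.degree v}) (t := Y)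
  omega

end SimpleGraph

theorem exists_isVertexCover_card_eq_vcNum {V : Type*} [Fintype V] (G : SimpleGraph V) :
    ∃ Y : Finset V, G.IsVertexCover Y ∧ #Y = vcNum G := by
  obtain ⟨Y, hY, hcard⟩ := Nat.sInf_mem (s := {n : ℕ | ∃ S : Finset V,
    (∀ e ∈ G.edgeSet, ∃ x ∈ S, x ∈ e) ∧ S.card = n})
    ⟨_, univ, fun e _ ↦ ⟨e.out.1, mem_univ _, Sym2.out_fst_mem e⟩, rfl⟩
  refine ⟨Y, fun v w hvw ↦ ?_, hcard⟩
  obtain ⟨x, hxY, hx⟩ := hY s(v, w) hvw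
  rcases Sym2.mem_iff.1 hx with rfl | rfl
  exacts [.inl hxY, .inr hxY]

theorem tree_internal_edges_and_vertices_general {V : Type*} [Fintype V]
    (G : SimpleGraph V) [DecidableRel G.Adj] (hT : G.IsTree) :
    {e ∈ G.edgeSet | ∀ x, x ∈ e → 2 ≤ G.degree x}.ncard ≤
        Fintype.card V - (Finset.univ.filter fun v => G.degree v = 1).card - 1 ∧
      {v : V | 2 ≤ G.degree v}.ncard ≤ 2 * vcNum G := by
  classical
  constructor
  · convert hT.card_internal_edges_le
    rw [← Set.ncard_coe_finset]
    congr 1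
    ext e
    simp
  · obtain ⟨Y, hY, hcard⟩ := exists_isVertexCover_card_eq_vcNum G
    rw [← hcard, ← coe_filter_univ, Set.ncard_coe_finset]
    exact hT.card_internal_le_two_mul hY

/-- in a finite tree `G` with `ℓ ≥ 2` leaves, the number of internal edges (both
endpoints of degree ≥ 2) is at most `|V(G)| - ℓ - 1`, and the number of internal vertices is
at most twice the vertex cover number of `G`. -/
theorem tree_internal_edges_and_vertices {V : Type*} [Fintype V] [DecidableEq V]
    (G : SimpleGraph V) [DecidableRel G.Adj] (hT : G.IsTree)
    (hl : 2 ≤ (Finset.univ.filter fun v => G.degree v = 1).card) :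
    {e ∈ G.edgeSet | ∀ x, x ∈ e → 2 ≤ G.degree x}.ncard ≤
        Fintype.card V - (Finset.univ.filter fun v => G.degree v = 1).card - 1 ∧
      {v : V | 2 ≤ G.degree v}.ncard ≤ 2 * vcNum G :=
  tree_internal_edges_and_vertices_general G hT
end

section
/- For Δ = 2, the duration of a fastest temporal path from s to t in a 2-periodic temporal graph equals the duration of a fastest temporal path from t to s, whenever the underlying graph is a tree. -/
def consecutiveSum {α M : Type*} [AddCommMonoid M] (f : α → α → M) : List α → M
  | x :: y :: rest => f x y + consecutiveSum f (y :: rest)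
  | _ => 0

section consecutiveSum

variable {α M : Type*} [AddCommMonoid M]

theorem consecutiveSum_append_pair (f : α → α → M) (x y : α) :
    ∀ l : List α, consecutiveSum f (l ++ [x, y]) = consecutiveSum f (l ++ [x]) + f x y
  | [] => by simp [consecutiveSum]
  | [a] => by simp only [consecutiveSum, List.cons_append, List.nil_append, add_zero]
  | a :: b :: l => by
    simp only [List.cons_append, consecutiveSum, add_assoc]
    rw [← List.cons_append, ← List.cons_append, consecutiveSum_append_pair f x y (b :: l)]

theorem consecutiveSum_reverse (f : α → α → M) :
    ∀ l : List α, consecutiveSum f l.reverse = consecutiveSum (flip f) l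
  | [] => rfl
  | [_] => rfl
  | a :: b :: l => by
    rw [List.reverse_cons, List.reverse_cons, List.append_assoc, List.singleton_append,
      consecutiveSum_append_pair, ← List.reverse_cons, consecutiveSum_reverse f (b :: l),
      consecutiveSum, add_comm]
    rfl

theorem consecutiveSum_congr {f g : α → α → M} :
    ∀ {l : List α}, (∀ x ∈ l, ∀ y ∈ l, f x y = g x y) → consecutiveSum f l = consecutiveSum g l
  | [], _ | [_], _ => rfl
  | a :: b :: l, h => by
    rw [consecutiveSum, consecutiveSum, h a (by simp) b (by simp),
      consecutiveSum_congr fun x hx y hy => h x (.tail _ hx) y (.tail _ hy)]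

end consecutiveSum

theorem listDelay_eq_consecutiveSum {V : Type*} (Δ : ℤ) (lab : V → V → ℤ) :
    ∀ l : List V, listDelay Δ lab l = consecutiveSum (tdelay Δ) (List.zipWith lab l l.tail)
  | [] | [_] | [_, _] => rfl
  | a :: b :: c :: rest => by
    rw [listDelay, listDelay_eq_consecutiveSum Δ lab (b :: c :: rest)]
    rfl

theorem tdelay_two_comm {a b : ℤ} (ha : a = 1 ∨ a = 2) (hb : b = 1 ∨ b = 2) :
    tdelay 2 a b = tdelay 2 b a := by
  rcases ha with rfl | rfl <;> rcases hb with rfl | rfl <;> decide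

namespace SimpleGraph.Walk

variable {V : Type*} {G : SimpleGraph V} {u v : V}

theorem listDelay_support (Δ : ℤ) (lab : {f : V → V → ℤ // ∀ x y, f x y = f y x})
    (p : G.Walk u v) :
    listDelay Δ lab.1 p.support = consecutiveSum (tdelay Δ) (p.edges.map (Sym2.lift lab)) := by
  rw [listDelay_eq_consecutiveSum, edges_eq_zipWith_support, List.map_zipWith]
  rfl

theorem listDelay_reverse_support (Δ : ℤ) (lab : {f : V → V → ℤ // ∀ x y, f x y = f y x})
    (p : G.Walk u v) :
    listDelay Δ lab.1 p.reverse.support =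
      consecutiveSum (flip (tdelay Δ)) (p.edges.map (Sym2.lift lab)) := by
  rw [listDelay_support, edges_reverse, List.map_reverse, consecutiveSum_reverse]

end SimpleGraph.Walk

theorem delta_two_duration_symmetric_general {V : Type*} (G : SimpleGraph V)
    (lab : V → V → ℤ) (hsym : ∀ x y, lab x y = lab y x)
    (hrange : ∀ x y, G.Adj x y → lab x y = 1 ∨ lab x y = 2)
    (s t : V) (p : G.Walk s t) :
    1 + listDelay 2 lab p.support = 1 + listDelay 2 lab p.reverse.support := by
  have hlabels : ∀ x ∈ p.edges.map (Sym2.lift ⟨lab, hsym⟩), x = 1 ∨ x = 2 := by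
    simp only [List.mem_map]
    rintro _ ⟨e, he, rfl⟩
    induction e using Sym2.ind with
    | _ x y => exact hrange x y (p.adj_of_mem_edges he)
  congr 1
  rw [p.listDelay_support 2 ⟨lab, hsym⟩, p.listDelay_reverse_support 2 ⟨lab, hsym⟩]
  exact consecutiveSum_congr fun x hx y hy => tdelay_two_comm (hlabels x hx) (hlabels y hy)

/-- for `Δ = 2` on a tree, the duration of a fastest temporal path from `s` to
`t` (namely `1` plus the sum of travel delays along the unique `s`-`t` path) equals the
duration of a fastest temporal path from `t` to `s`. -/
theorem delta_two_duration_symmetric {V : Type*} (G : SimpleGraph V) (hT : G.IsTree)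
    (lab : V → V → ℤ) (hsym : ∀ x y, lab x y = lab y x)
    (hrange : ∀ x y, G.Adj x y → lab x y = 1 ∨ lab x y = 2)
    (s t : V) (p : G.Walk s t) (hp : p.IsPath) :
    1 + listDelay 2 lab p.support = 1 + listDelay 2 lab p.reverse.support :=
  delta_two_duration_symmetric_general G lab hsym hrange s t p
end

section
/- Let Δ = 2 and let P be the unique path from s to t in a tree G with k edges, labeled by λ: E → {1,2}. Then the duration of the fastest temporal path from s to t equals k + (number of indices i ∈ [k-1] such that the i-th and (i+1)-st edges of P have equal labels). -/
/-- Total extension of the labels to `ℕ`. -/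
def labN (k : ℕ) (lab : Fin (k + 1) → ℤ) (n : ℕ) : ℤ :=
  lab ⟨min n k, Nat.lt_succ_of_le (min_le_right n k)⟩

/-- The optimal step increment between consecutive vertices. -/
def pstep (k : ℕ) (lab : Fin (k + 1) → ℤ) (j : ℕ) : ℤ :=
  if labN k lab j = labN k lab (j + 1) then 2 else 1

lemma labN_eq (k : ℕ) (lab : Fin (k + 1) → ℤ) (n : ℕ) (h : n ≤ k) :
    labN k lab n = lab ⟨n, by omega⟩ := by
  unfold labN
  congr 1
  exact Fin.ext (min_eq_left h)

lemma labN_eq' (k : ℕ) (lab : Fin (k + 1) → ℤ) (i : Fin (k + 1)) :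
    labN k lab i.val = lab i :=
  labN_eq k lab i.val (by omega)

lemma labN_mem (k : ℕ) (lab : Fin (k + 1) → ℤ)
    (hlab : ∀ i, lab i = 1 ∨ lab i = 2) (n : ℕ) :
    labN k lab n = 1 ∨ labN k lab n = 2 := hlab _

lemma pstep_ge_one (k : ℕ) (lab : Fin (k + 1) → ℤ) (j : ℕ) : 1 ≤ pstep k lab j := by
  unfold pstep; split <;> norm_num

lemma sum_pstep (k : ℕ) (lab : Fin (k + 1) → ℤ) :
    ∑ j ∈ Finset.range k, pstep k lab j =
      (k : ℤ) + ((Finset.univ.filter fun i : Fin k => lab i.castSucc = lab i.succ).card : ℤ) := by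
  have h1 : ∑ j ∈ Finset.range k, pstep k lab j = ∑ i : Fin k, pstep k lab i.val :=
    (Fin.sum_univ_eq_sum_range (fun j => pstep k lab j) k).symm
  have h2 : ∀ i : Fin k, pstep k lab i.val =
      1 + (if lab i.castSucc = lab i.succ then (1:ℤ) else 0) := by
    intro i
    have e1 : labN k lab i.val = lab i.castSucc := by
      have := labN_eq' k lab i.castSucc
      simpa using this
    have e2 : labN k lab (i.val + 1) = lab i.succ := by
      have := labN_eq' k lab i.succ
      simpa using this
    rw [pstep, e1, e2]
    split <;> norm_num
  rw [h1, Finset.sum_congr rfl (fun i _ => h2 i), Finset.sum_add_distrib]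
  have h3 : ((Finset.univ.filter fun i : Fin k => lab i.castSucc = lab i.succ).card : ℤ) =
      ∑ i : Fin k, (if lab i.castSucc = lab i.succ then (1:ℤ) else 0) := by
    rw [Finset.card_filter]
    push_cast
    rfl
  rw [h3]
  simp

lemma sum_pstep_strictmono (k : ℕ) (lab : Fin (k + 1) → ℤ) {a b : ℕ} (h : a < b) :
    ∑ j ∈ Finset.range a, pstep k lab j < ∑ j ∈ Finset.range b, pstep k lab j := by
  apply Finset.sum_lt_sum_of_subset (Finset.range_subset_range.2 h.le)
    (i := a) (by simpa using h) (by simp)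
  · exact lt_of_lt_of_le one_pos (pstep_ge_one k lab a)
  · intro j _ _; exact le_trans zero_le_one (pstep_ge_one k lab j)

lemma sum_pstep_ge (k : ℕ) (lab : Fin (k + 1) → ℤ) (n : ℕ) :
    (n : ℤ) ≤ ∑ j ∈ Finset.range n, pstep k lab j := by
  calc (n : ℤ) = ∑ j ∈ Finset.range n, (1:ℤ) := by simp
  _ ≤ _ := Finset.sum_le_sum (fun j _ => pstep_ge_one k lab j)

lemma pstep_parity (k : ℕ) (lab : Fin (k + 1) → ℤ)
    (hlab : ∀ i, lab i = 1 ∨ lab i = 2) (n : ℕ) :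
    2 ∣ (labN k lab 0 + ∑ j ∈ Finset.range n, pstep k lab j) - labN k lab n := by
  induction n with
  | zero => simp
  | succ n ih =>
    have h1 := labN_mem k lab hlab n
    have h2 := labN_mem k lab hlab (n + 1)
    rw [Finset.sum_range_succ, pstep]
    by_cases hEq : labN k lab n = labN k lab (n + 1)
    · rw [if_pos hEq]; omega
    · rw [if_neg hEq]; omega

lemma pstep_lower (k : ℕ) (lab : Fin (k + 1) → ℤ) (u : ℕ → ℤ)
    (hmono : ∀ a b : ℕ, a < b → b ≤ k → u a < u b)
    (hpar : ∀ n, n ≤ k → 2 ∣ u n - labN k lab n) :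
    ∀ n, n ≤ k → ∑ j ∈ Finset.range n, pstep k lab j ≤ u n - u 0 := by
  intro n
  induction n with
  | zero => intro _; simp
  | succ n ih =>
    intro h
    have ihn := ih (by omega)
    have hlt := hmono n (n + 1) (by omega) h
    rw [Finset.sum_range_succ, pstep]
    by_cases hEq : labN k lab n = labN k lab (n + 1)
    · rw [if_pos hEq]
      have d1 := hpar n (by omega)
      have d2 := hpar (n + 1) h
      omega
    · rw [if_neg hEq]
      omega

/-- for `Δ = 2`, the duration of the fastest temporal path along a path with
`k+1` edges labeled by `lab : Fin (k+1) → {1,2}` equals `(k+1)` plus the number of indices at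
which two consecutive edges of the path carry equal labels. -/
theorem fastest_duration_delta_two (k : ℕ) (lab : Fin (k + 1) → ℤ)
    (hlab : ∀ i, lab i = 1 ∨ lab i = 2) :
    IsLeast (durations 2 lab)
      (((k : ℤ) + 1) +
        (Finset.univ.filter fun i : Fin k => lab i.castSucc = lab i.succ).card) := by
  have hlab0 : labN k lab 0 = lab 0 := by simpa using labN_eq' k lab 0
  constructor
  · -- membership: the greedy schedule achieves the bound
    refine ⟨fun i => labN k lab 0 + ∑ j ∈ Finset.range i.val, pstep k lab j, ?_, ?_, ?_⟩
    · intro i i' hii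
      have := sum_pstep_strictmono k lab (a := i.val) (b := i'.val) hii
      simpa using this
    · intro i
      constructor
      · show lab i ≤ labN k lab 0 + ∑ j ∈ Finset.range i.val, pstep k lab j
        rcases Nat.eq_zero_or_pos i.val with h0 | hpos
        · have hi0 : i = 0 := Fin.ext h0
          subst hi0
          simp [hlab0]
        · have hs := sum_pstep_ge k lab i.val
          have h1 := hlab 0
          have h2 := hlab i
          have h3 : (1:ℤ) ≤ (i.val : ℤ) := by exact_mod_cast hpos
          rw [hlab0]
          rcases h1 with h1 | h1 <;> rcases h2 with h2 | h2 <;> linarith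
      · show 2 ∣ (labN k lab 0 + ∑ j ∈ Finset.range i.val, pstep k lab j) - lab i
        rw [← labN_eq' k lab i]
        exact pstep_parity k lab hlab i.val
    · show _ = (labN k lab 0 + ∑ j ∈ Finset.range (Fin.last k).val, pstep k lab j) -
          (labN k lab 0 + ∑ j ∈ Finset.range (0 : Fin (k+1)).val, pstep k lab j) + 1
      have hlast : (Fin.last k).val = k := rfl
      have h0 : ((0 : Fin (k+1)).val) = 0 := rfl
      rw [hlast, h0, sum_pstep]
      simp
      ring
  · -- lower bound
    rintro d ⟨t, hmono, hc, rfl⟩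
    have key := pstep_lower k lab (fun n => t ⟨min n k, Nat.lt_succ_of_le (min_le_right n k)⟩)
      (fun a b hab hbk => hmono (by simp [Fin.lt_def]; omega))
      (fun n hn => by
        have := (hc ⟨min n k, Nat.lt_succ_of_le (min_le_right n k)⟩).2
        have e : labN k lab n = lab ⟨min n k, Nat.lt_succ_of_le (min_le_right n k)⟩ := rfl
        rw [e]
        exact this)
      k le_rfl
    have e1 : (⟨min k k, Nat.lt_succ_of_le (min_le_right k k)⟩ : Fin (k+1)) = Fin.last k :=
      Fin.ext (by simp)
    have e2 : (⟨min 0 k, Nat.lt_succ_of_le (min_le_right 0 k)⟩ : Fin (k+1)) = 0 :=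
      Fin.ext (by simp)
    simp only [e1, e2] at key
    rw [sum_pstep] at key
    linarith
end

section
/- Every network matrix is totally unimodular. Specifically: let T be a directed tree on vertex set V with arc set A, and let A' be a set of directed pairs on V. Define the matrix M ∈ {-1,0,1}^{A×A'} where M_{(a,b),(s,t)} is 1 if arc (a,b) appears forward on the unique path from s to t in the underlying tree, -1 if it appears backward, and 0 otherwise. Then every square submatrix of M has determinant in {-1,0,1}. -/
/-!
For an arc `(a, b)` of the tree let `side a b` be the set of vertices on the `b`-side of it.
Along a walk the indicator of `side a b` changes only when the arc is traversed, so on the path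
from `s` to `t` the entry of the network matrix is `1_{side a b} t - 1_{side a b} s`. The sides of
the arcs of a tree form a cross-free family. For such a family take a minimal member `T` among
the sets and their complements: every member contains `T` or misses it, so subtracting a column
that crosses `T` from the other columns crossing `T` moves their endpoints out of `T`. Then the
row of `T` has a single nonzero entry, and the determinant is expanded along it.
-/

/-- Cross-freeness in the sense of Edmonds and Giles: one of `A ∩ B`, `A \ B`, `B \ A` and
`(A ∪ B)ᶜ` is empty. -/
def CrossFree {α : Type*} (A B : Set α) : Prop := A ⊆ B ∨ B ⊆ A ∨ A ⊆ Bᶜ ∨ Aᶜ ⊆ B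

lemma Set.indicator_one_eq_of_mem_iff {α M : Type*} [Zero M] [One M] {S : Set α} {x y : α}
    (h : x ∈ S ↔ y ∈ S) : S.indicator (1 : α → M) x = S.indicator 1 y := by
  by_cases hx : x ∈ S
  · rw [Set.indicator_of_mem hx, Set.indicator_of_mem (h.mp hx), Pi.one_apply, Pi.one_apply]
  · rw [Set.indicator_of_notMem hx, Set.indicator_of_notMem (h.not.mp hx)]

namespace CrossFree

variable {α : Type*} {A B : Set α}

lemma compl_left (h : CrossFree A B) : CrossFree Aᶜ B := by
  unfold CrossFree at *
  rw [compl_compl, Set.compl_subset_compl, Set.subset_compl_comm]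
  tauto

lemma subset_or_subset_compl (h : CrossFree A B) (h₁ : B ⊆ A → A ⊆ B) (h₂ : Bᶜ ⊆ A → A ⊆ Bᶜ) :
    A ⊆ B ∨ A ⊆ Bᶜ := by
  rcases h with h | h | h | h
  · exact .inl h
  · exact .inl (h₁ h)
  · exact .inr h
  · exact .inr (h₂ (Set.compl_subset_comm.mp h))

end CrossFree

lemma exists_subset_or_subset_compl_of_crossFree {α ι : Type*} [Finite ι] [Nonempty ι]
    {S : ι → Set α} (hS : ∀ i j, CrossFree (S i) (S j)) :
    ∃ i₀ T, (S i₀ = T ∨ S i₀ = Tᶜ) ∧ ∀ i, T ⊆ S i ∨ T ⊆ (S i)ᶜ := by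
  set F := Set.range S ∪ Set.range (compl ∘ S)
  obtain ⟨T, hT, hmin⟩ := ((Set.finite_range S).union (Set.finite_range _)).exists_minimal
    (⟨_, .inl ⟨Classical.arbitrary ι, rfl⟩⟩ : F.Nonempty)
  have hmem : ∀ i, S i ∈ F := fun i => .inl ⟨i, rfl⟩
  have hmem' : ∀ i, (S i)ᶜ ∈ F := fun i => .inr ⟨i, rfl⟩
  obtain ⟨i₀, rfl⟩ | ⟨i₀, rfl⟩ := hT
  · exact ⟨i₀, _, .inl rfl,
      fun i => (hS i₀ i).subset_or_subset_compl (hmin (hmem i)) (hmin (hmem' i))⟩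
  · exact ⟨i₀, _, .inr (compl_compl _).symm,
      fun i => (hS i₀ i).compl_left.subset_or_subset_compl (hmin (hmem i)) (hmin (hmem' i))⟩

open Matrix

lemma Matrix.det_mem_range_signType_of_row_eq_single {R : Type*} [CommRing R] {k : ℕ}
    (A : Matrix (Fin (k + 1)) (Fin (k + 1)) R) (i j : Fin (k + 1)) (hrow : ∀ j' ≠ j, A i j' = 0)
    (hij : A i j ∈ Set.range SignType.cast)
    (hminor : (A.submatrix i.succAbove j.succAbove).det ∈ Set.range SignType.cast) :
    A.det ∈ Set.range SignType.cast := by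
  rw [det_succ_row A i, Finset.sum_eq_single j (fun j' _ hj' => by simp [hrow j' hj']) (by simp)]
  change _ ∈ MonoidHom.mrange SignType.castHom.toMonoidHom
  have hneg : (-1 : R) ∈ MonoidHom.mrange SignType.castHom.toMonoidHom := ⟨-1, by simp⟩
  exact mul_mem (mul_mem (pow_mem hneg _) hij) hminor

section CrossingMatrix

variable {V n R : Type*} [CommRing R]

variable (R) in
noncomputable def crossingMatrix {ι κ : Type*} (S : ι → Set V) (p : κ → V × V) : Matrix ι κ R :=
  Matrix.of fun i j => (S i).indicator 1 (p j).2 - (S i).indicator 1 (p j).1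

lemma crossingMatrix_apply_mem {ι κ : Type*} (S : ι → Set V) (p : κ → V × V) (i : ι) (j : κ) :
    crossingMatrix R S p i j ∈ Set.range SignType.cast := by
  classical
  simp only [crossingMatrix, of_apply, Set.indicator_apply, Pi.one_apply]
  split_ifs
  exacts [⟨0, by simp⟩, ⟨1, by simp⟩, ⟨-1, by simp⟩, ⟨0, by simp⟩]

open Classical in
noncomputable def collapse (T : Set V) (w v : V) : V := if v ∈ T then w else v

lemma collapse_notMem {T : Set V} {w : V} (hw : w ∉ T) (v : V) : collapse T w v ∉ T := by
  unfold collapse; split_ifs with hv <;> assumption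

lemma indicator_eq_indicator_collapse_add {S T : Set V} (hST : T ⊆ S ∨ T ⊆ Sᶜ) {x : V × V}
    (hx : ¬(x.1 ∈ T ↔ x.2 ∈ T)) {w : V} (hw : w = x.1 ∨ w = x.2) (hwT : w ∉ T) (v : V) :
    S.indicator (1 : V → R) v = S.indicator 1 (collapse T w v) + T.indicator 1 v *
      ((T.indicator 1 x.2 - T.indicator 1 x.1) * (S.indicator 1 x.2 - S.indicator 1 x.1)) := by
  by_cases hv : v ∈ T
  swap
  · simp [collapse, hv]
  have hconst : ∀ y ∈ T, S.indicator (1 : V → R) y = S.indicator 1 v := fun y hy =>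
    Set.indicator_one_eq_of_mem_iff <| hST.elim (fun h => iff_of_true (h hy) (h hv))
      (fun h => iff_of_false (h hy) (h hv))
  simp only [collapse, hv, if_true, Set.indicator_of_mem hv, Pi.one_apply, one_mul]
  rcases hw with rfl | rfl
  · have h₂ : x.2 ∈ T := by tauto
    rw [hconst _ h₂, Set.indicator_of_mem h₂, Set.indicator_of_notMem hwT]
    simp
  · have h₁ : x.1 ∈ T := by tauto
    rw [hconst _ h₁, Set.indicator_of_mem h₁, Set.indicator_of_notMem hwT]
    simp

lemma det_crossingMatrix_eq_collapse [Fintype n] [DecidableEq n] {S : n → Set V} {T : Set V}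
    (hT : ∀ i, T ⊆ S i ∨ T ⊆ (S i)ᶜ) {p : n → V × V} {j₀ : n}
    (hj₀ : ¬((p j₀).1 ∈ T ↔ (p j₀).2 ∈ T)) {w : V} (hw : w = (p j₀).1 ∨ w = (p j₀).2)
    (hwT : w ∉ T) :
    (crossingMatrix R S p).det = (crossingMatrix R S
      (Function.update (Prod.map (collapse T w) (collapse T w) ∘ p) j₀ (p j₀))).det := by
  rw [← det_transpose, ← det_transpose (crossingMatrix R S _)]
  refine det_eq_of_forall_row_eq_smul_add_const (fun j => if j = j₀ then 0 else
      (T.indicator 1 (p j₀).2 - T.indicator 1 (p j₀).1) *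
        (T.indicator 1 (p j).2 - T.indicator 1 (p j).1)) j₀ (if_pos rfl) fun j i => ?_
  simp only [transpose_apply, crossingMatrix, of_apply, Function.update_self]
  by_cases hj : j = j₀
  · subst hj
    simp
  · rw [if_neg hj, Function.update_of_ne hj, Function.comp_apply, Prod.map_fst, Prod.map_snd,
      indicator_eq_indicator_collapse_add (hT i) hj₀ hw hwT (p j).2,
      indicator_eq_indicator_collapse_add (hT i) hj₀ hw hwT (p j).1]
    ring

theorem det_crossingMatrix_mem_range : ∀ {k : ℕ} (S : Fin k → Set V),
    (∀ i j, CrossFree (S i) (S j)) → ∀ p : Fin k → V × V,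
      (crossingMatrix R S p).det ∈ Set.range SignType.cast
  | 0, _, _, _ => ⟨1, by simp⟩
  | k + 1, S, hS, p => by
    obtain ⟨i₀, T, hi₀, hT⟩ := exists_subset_or_subset_compl_of_crossFree hS
    have hrow : ∀ x y : V, (x ∈ T ↔ y ∈ T) →
        (S i₀).indicator (1 : V → R) x = (S i₀).indicator 1 y := fun x y h =>
      Set.indicator_one_eq_of_mem_iff <| by
        rcases hi₀ with h₀ | h₀ <;> rw [h₀]
        exacts [h, not_congr h]
    by_cases hcross : ∀ j, ((p j).1 ∈ T ↔ (p j).2 ∈ T)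
    · refine ⟨0, (det_eq_zero_of_row_eq_zero i₀ fun j => ?_).symm⟩
      exact sub_eq_zero.mpr (hrow _ _ (hcross j).symm)
    obtain ⟨j₀, hj₀⟩ := not_forall.mp hcross
    obtain ⟨w, hw, hwT⟩ : ∃ w, (w = (p j₀).1 ∨ w = (p j₀).2) ∧ w ∉ T := by
      by_cases h : (p j₀).1 ∈ T
      exacts [⟨_, .inr rfl, fun h' => hj₀ (iff_of_true h h')⟩, ⟨_, .inl rfl, h⟩]
    rw [det_crossingMatrix_eq_collapse hT hj₀ hw hwT]
    refine det_mem_range_signType_of_row_eq_single _ i₀ j₀ (fun j hj => ?_)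
      (crossingMatrix_apply_mem _ _ _ _)
      (det_crossingMatrix_mem_range (S ∘ i₀.succAbove) (fun _ _ => hS _ _) _)
    simp only [crossingMatrix, of_apply, Function.update_of_ne hj, Function.comp_apply,
      Prod.map_fst, Prod.map_snd]
    exact sub_eq_zero.mpr <|
      hrow _ _ (iff_of_false (collapse_notMem hwT _) (collapse_notMem hwT _))

theorem isTotallyUnimodular_crossingMatrix {ι κ : Type*} {S : ι → Set V}
    (hS : ∀ i j, CrossFree (S i) (S j)) (p : κ → V × V) :
    (crossingMatrix R S p).IsTotallyUnimodular :=
  fun _ f g _ _ => det_crossingMatrix_mem_range (S ∘ f) (fun _ _ => hS _ _) (p ∘ g)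

end CrossingMatrix

namespace SimpleGraph

variable {V : Type*} {G : SimpleGraph V}

def side (G : SimpleGraph V) (a b : V) : Set V := {v | (G.deleteEdges {s(a, b)}).Reachable b v}

lemma mem_side_self (a b : V) : b ∈ G.side a b := Reachable.refl b

lemma IsBridge.notMem_side {a b : V} (h : G.IsBridge s(a, b)) : a ∉ G.side a b :=
  fun ha => isBridge_iff.mp h ha.symm

lemma mem_side_iff_of_adj {a b x y : V} (hxy : G.Adj x y) (hne : s(x, y) ≠ s(a, b)) :
    x ∈ G.side a b ↔ y ∈ G.side a b :=
  have h : (G.deleteEdges {s(a, b)}).Adj x y := deleteEdges_adj.mpr ⟨hxy, hne⟩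
  ⟨fun hx => hx.trans h.reachable, fun hy => hy.trans h.symm.reachable⟩

lemma side_subset_or_subset_compl {a b a' b' : V} (ha' : a' ∉ G.side a b)
    (hb' : b' ∉ G.side a b) : G.side a b ⊆ G.side a' b' ∨ G.side a b ⊆ (G.side a' b')ᶜ := by
  have key : ∀ v ∈ G.side a b, (v ∈ G.side a' b' ↔ b ∈ G.side a' b') := by
    intro v hv
    induction (reachable_iff_reflTransGen _ _).mp hv with
    | refl => rfl
    | @tail x y hbx hxy ih =>
      have hx : x ∈ G.side a b := (reachable_iff_reflTransGen _ _).mpr hbx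
      have hne : s(x, y) ≠ s(a', b') := fun h => by
        obtain rfl | rfl := Sym2.mem_iff.mp (h ▸ Sym2.mem_mk_left x y) <;> contradiction
      rw [← ih hx, mem_side_iff_of_adj (deleteEdges_adj.mp hxy).1 hne]
  by_cases hb : b ∈ G.side a' b'
  · exact .inl fun v hv => (key v hv).mpr hb
  · exact .inr fun v hv => mt (key v hv).mp hb

lemma side_compl (hG : G.Connected) {a b : V} (h : G.IsBridge s(a, b)) :
    (G.side a b)ᶜ = G.side b a := by
  have hswap : G.side b a = {v | (G.deleteEdges {s(a, b)}).Reachable a v} := by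
    rw [side, Sym2.eq_swap]
  have hcover : ∀ v, v ∈ G.side a b ∨ v ∈ G.side b a := by
    intro v
    induction (reachable_iff_reflTransGen _ _).mp (hG a v) with
    | refl => exact .inr (mem_side_self b a)
    | @tail x y _ hxy ih =>
      by_cases he : s(x, y) = s(a, b)
      · obtain rfl | rfl := Sym2.mem_iff.mp (he ▸ Sym2.mem_mk_right x y)
        · exact .inr (mem_side_self _ _)
        · exact .inl (mem_side_self _ _)
      · have he' : s(x, y) ≠ s(b, a) := by rwa [Sym2.eq_swap (a := b)]
        exact ih.imp (mem_side_iff_of_adj hxy he).mp (mem_side_iff_of_adj hxy he').mp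
  ext v
  refine ⟨(hcover v).resolve_left, fun hba hab => ?_⟩
  rw [hswap] at hba
  exact isBridge_iff.mp h (hba.trans hab.symm)

theorem IsTree.crossFree_side (hT : G.IsTree) {a b a' b' : V} (hab : G.Adj a b)
    (hab' : G.Adj a' b') : CrossFree (G.side a b) (G.side a' b') := by
  have hcompl := side_compl hT.connected (isAcyclic_iff_forall_adj_isBridge.mp hT.isAcyclic hab)
  by_cases he : s(a', b') = s(a, b)
  · obtain ⟨rfl, rfl⟩ | ⟨rfl, rfl⟩ := Sym2.eq_iff.mp he
    · exact .inl subset_rfl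
    · exact .inr (.inr (.inl (by rw [← hcompl, compl_compl])))
  have hiff := mem_side_iff_of_adj hab' he
  by_cases ha' : a' ∈ G.side a b
  · have ha'' : a' ∉ G.side b a := by rw [← hcompl]; exact not_not.mpr ha'
    have hb'' : b' ∉ G.side b a := by rw [← hcompl]; exact not_not.mpr (hiff.mp ha')
    rcases side_subset_or_subset_compl ha'' hb'' with h | h
    · exact .inr (.inr (.inr (hcompl ▸ h)))
    · exact .inr (.inl (Set.compl_subset_compl.mp (hcompl ▸ h)))
  · rcases side_subset_or_subset_compl ha' (hiff.not.mp ha') with h | h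
    · exact .inl h
    · exact .inr (.inr (.inl h))

lemma Walk.sum_darts_sub {M : Type*} [AddCommGroup M] (χ : V → M) :
    ∀ {u v : V} (p : G.Walk u v), (p.darts.map fun d => χ d.snd - χ d.fst).sum = χ v - χ u
  | _, _, .nil => by simp
  | _, _, .cons _ p => by simp [sum_darts_sub χ p]

lemma IsBridge.indicator_side_snd_sub_fst [DecidableEq V] {R : Type*} [Ring R] {a b : V}
    (hab : G.Adj a b) (h : G.IsBridge s(a, b)) (d : G.Dart) :
    (G.side a b).indicator (1 : V → R) d.snd - (G.side a b).indicator 1 d.fst =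
      (if d = ⟨(a, b), hab⟩ then 1 else 0) - (if d = ⟨(b, a), hab.symm⟩ then 1 else 0) := by
  have hb : (G.side a b).indicator (1 : V → R) b = 1 := Set.indicator_of_mem (mem_side_self a b) _
  have ha : (G.side a b).indicator (1 : V → R) a = 0 := Set.indicator_of_notMem h.notMem_side _
  by_cases h₁ : d = ⟨(a, b), hab⟩
  · subst h₁
    simp [hb, ha, hab.ne]
  by_cases h₂ : d = ⟨(b, a), hab.symm⟩
  · subst h₂
    simp [hb, ha, hab.ne]
  have hne : d.edge ≠ s(a, b) := fun he => by
    rcases (dart_edge_eq_iff d ⟨(a, b), hab⟩).mp he with h | h <;> contradiction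
  rw [if_neg h₁, if_neg h₂, sub_self, sub_eq_zero]
  exact Set.indicator_one_eq_of_mem_iff (mem_side_iff_of_adj d.adj hne).symm

theorem Walk.IsPath.ite_infix_support_eq_indicator_side_sub [DecidableEq V] {R : Type*} [Ring R]
    {a b u v : V} {p : G.Walk u v} (hp : p.IsPath) (hab : G.Adj a b) (h : G.IsBridge s(a, b)) :
    (if [a, b] <:+: p.support then (1 : R) else if [b, a] <:+: p.support then -1 else 0) =
      (G.side a b).indicator 1 v - (G.side a b).indicator 1 u := by
  have not_both : ¬ ([a, b] <:+: p.support ∧ [b, a] <:+: p.support) := by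
    simp only [← mem_darts_iff_infix_support hab, ← mem_darts_iff_infix_support hab.symm]
    exact fun ⟨h₁, h₂⟩ => Dart.symm_ne ⟨(a, b), hab⟩
      (List.inj_on_of_nodup_map hp.isTrail.edges_nodup h₂ h₁ (Dart.edge_symm ⟨(a, b), hab⟩))
  rw [← p.sum_darts_sub, ← List.sum_toFinset _ (darts_nodup_of_support_nodup hp.support_nodup)]
  simp only [h.indicator_side_snd_sub_fst hab, Finset.sum_sub_distrib, Finset.sum_ite_eq',
    List.mem_toFinset, mem_darts_iff_infix_support]
  split_ifs <;> simp_all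

end SimpleGraph

/-- every network matrix is totally unimodular. Rows are indexed by `ι`, each row
`i` corresponding to an arc `f i` (an orientation of an edge of a tree `G`); columns are
indexed by `κ`, each column `j` corresponding to a directed pair `g j` of vertices. The entry
`M i j` is `1` if the arc `f i` appears forward on the unique path from `(g j).1` to `(g j).2`
(i.e. its endpoints occur consecutively in that order in the path's vertex list), `-1` if it
appears backward, and `0` otherwise. Then every square submatrix of `M` has determinant in
`{-1, 0, 1}`. -/
theorem network_matrix_totally_unimodular {V ι κ : Type*} [DecidableEq V] (G : SimpleGraph V)
    (hT : G.IsTree) (P : ∀ s t : V, G.Walk s t) (hP : ∀ s t, (P s t).IsPath)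
    (f : ι → V × V) (hf : ∀ i, G.Adj (f i).1 (f i).2)
    (g : κ → V × V) (M : Matrix ι κ ℤ)
    (hM : ∀ i j, M i j =
      if [(f i).1, (f i).2] <:+: (P (g j).1 (g j).2).support then 1
      else if [(f i).2, (f i).1] <:+: (P (g j).1 (g j).2).support then -1
      else 0) :
    M.IsTotallyUnimodular := by
  have hM' : M = crossingMatrix ℤ (fun i => G.side (f i).1 (f i).2) g := by
    ext i j
    exact (hM i j).trans <| (hP _ _).ite_infix_support_eq_indicator_side_sub (hf i)
      (SimpleGraph.isAcyclic_iff_forall_adj_isBridge.mp hT.isAcyclic (hf i))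
  rw [hM']
  exact isTotallyUnimodular_crossingMatrix (fun i j => hT.crossFree_side (hf i) (hf j)) g
end

section
/- Let G be a tree, and let G' be the graph obtained from the line graph L(G) by iteratively contracting every maximal clique with more than two vertices to a single vertex. Then G' is a tree, and the edges of G' are in bijection with the degree-2 vertices of G. -/
/-- Two edges of `G` are related if they share an endpoint of degree greater than two; the
quotient of the edge set by (the equivalence closure of) this relation corresponds to
iteratively contracting every maximal clique of size `> 2` in the line graph `L(G)`. -/
def edgeRel {V : Type*} [Fintype V] (G : SimpleGraph V) [DecidableRel G.Adj] :
    G.edgeSet → G.edgeSet → Prop :=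
  fun e f => ∃ x : V, x ∈ (e : Sym2 V) ∧ x ∈ (f : Sym2 V) ∧ 2 < G.degree x

/-- The graph obtained from the line graph of `G` by contracting all maximal cliques with more
than two vertices: vertices are the classes of edges of `G`, and two distinct classes are
adjacent iff they contain edges of `G` sharing an endpoint. -/
def contractedLineGraph {V : Type*} [Fintype V] (G : SimpleGraph V) [DecidableRel G.Adj] :
    SimpleGraph (Quot (edgeRel G)) :=
  SimpleGraph.fromRel fun c c' => ∃ e f : G.edgeSet, Quot.mk _ e = c ∧ Quot.mk _ f = c' ∧
    ∃ x : V, x ∈ (e : Sym2 V) ∧ x ∈ (f : Sym2 V)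

/-!
An edge of `G'` joins two classes containing edges of `G` that meet at a vertex `x`; since edges
meeting at a vertex of degree `> 2` are merged, `x` has degree exactly two, and the edge of `G'` is
determined by `x`. Fix such an `x` with neighbours `a`, `b`, and say that an edge of `G` lies on
`a`'s side if its endpoints other than `x` are reachable from `a` once the edge `xa` is deleted.
This is constant on edge classes and along every edge of `G'` except the one coming from `x`,
while `xa` being a bridge of the tree `G` puts the class of `xa` on `a`'s side and that of `xb`
not. Hence the edge of `G'` coming from `x` is a bridge, so `G'` is acyclic, and no other
degree-two vertex produces the same edge. Connectivity of `G'` is inherited from `G` along walks.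
-/

namespace SimpleGraph

section General

variable {V : Type*} {G : SimpleGraph V}

theorem Reachable.iff_of_forall_adj {p : V → Prop} (hp : ∀ u v, G.Adj u v → (p u ↔ p v))
    {u v : V} (h : G.Reachable u v) : p u ↔ p v := by
  obtain ⟨w⟩ := h
  induction w with
  | nil => rfl
  | cons ha _ ih => exact (hp _ _ ha).trans ih

theorem reachable_deleteEdges_of_mem_of_mem {g : Sym2 V} (hg : g ∈ G.edgeSet) {x a v w : V}
    (hv : v ∈ g) (hw : w ∈ g) (hvx : v ≠ x) (hwx : w ≠ x) :
    (G.deleteEdges {s(x, a)}).Reachable v w := by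
  rcases eq_or_ne v w with rfl | hvw
  · rfl
  obtain rfl := (Sym2.mem_and_mem_iff hvw).mp ⟨hv, hw⟩
  refine Adj.reachable ((deleteEdges_adj ..).mpr ⟨hg, fun h ↦ ?_⟩)
  have hx : x ∈ s(v, w) := (Set.mem_singleton_iff.mp h) ▸ Sym2.mem_mk_left x a
  rcases Sym2.mem_iff.mp hx with rfl | rfl <;> contradiction

theorem exists_adj_eq_mk {x : V} {e : G.edgeSet} (hx : x ∈ (e : Sym2 V)) :
    ∃ a, ∃ hxa : G.Adj x a, e = ⟨s(x, a), hxa⟩ := by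
  obtain ⟨e, he⟩ := e
  obtain ⟨a, rfl⟩ := Sym2.mem_iff_exists.mp hx
  exact ⟨a, he, rfl⟩

end General

section Degree

variable {V : Type*} [Fintype V] {G : SimpleGraph V} [DecidableRel G.Adj] {x : V}

theorem coe_mem_incidenceFinset [DecidableEq V] {e : G.edgeSet} (he : x ∈ (e : Sym2 V)) :
    (e : Sym2 V) ∈ G.incidenceFinset x := by
  simpa using ⟨e.2, he⟩

theorem two_le_degree_of_mem_of_mem {e f : G.edgeSet} (he : x ∈ (e : Sym2 V))
    (hf : x ∈ (f : Sym2 V)) (hef : e ≠ f) : 2 ≤ G.degree x := by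
  classical
  rw [← card_incidenceFinset_eq_degree, Nat.succ_le_iff, Finset.one_lt_card]
  exact ⟨e, coe_mem_incidenceFinset he, f, coe_mem_incidenceFinset hf,
    Subtype.coe_injective.ne hef⟩

theorem eq_or_eq_of_degree_eq_two (hx : G.degree x = 2) {e f g : G.edgeSet}
    (he : x ∈ (e : Sym2 V)) (hf : x ∈ (f : Sym2 V)) (hef : e ≠ f) (hg : x ∈ (g : Sym2 V)) :
    g = e ∨ g = f := by
  classical
  by_contra! hne
  have : 2 < G.degree x := by
    rw [← card_incidenceFinset_eq_degree, Finset.two_lt_card]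
    refine ⟨e, coe_mem_incidenceFinset he, f, coe_mem_incidenceFinset hf, g,
      coe_mem_incidenceFinset hg, ?_, ?_, ?_⟩ <;> simp only [ne_eq, ← Subtype.ext_iff]
    exacts [hef, Ne.symm hne.1, Ne.symm hne.2]
  omega

theorem exists_ne_of_degree_eq_two (hx : G.degree x = 2) :
    ∃ e f : G.edgeSet, e ≠ f ∧ x ∈ (e : Sym2 V) ∧ x ∈ (f : Sym2 V) := by
  classical
  obtain ⟨e, f, hef, hs⟩ := Finset.card_eq_two.mp ((card_incidenceFinset_eq_degree G x).trans hx)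
  have he : e ∈ G.incidenceSet x := by simp [← mem_incidenceFinset, hs]
  have hf : f ∈ G.incidenceSet x := by simp [← mem_incidenceFinset, hs]
  exact ⟨⟨e, he.1⟩, ⟨f, hf.1⟩, by simpa using hef, he.2, hf.2⟩

end Degree

end SimpleGraph

namespace ContractedLineGraph

open SimpleGraph

section OnSide

variable {V : Type*} {G : SimpleGraph V}

def OnSide (x a : V) (g : G.edgeSet) : Prop :=
  ∀ v ∈ (g : Sym2 V), v ≠ x → (G.deleteEdges {s(x, a)}).Reachable a v

theorem onSide_iff {x a v : V} {g : G.edgeSet} (hv : v ∈ (g : Sym2 V)) (hvx : v ≠ x) :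
    OnSide x a g ↔ (G.deleteEdges {s(x, a)}).Reachable a v :=
  ⟨fun h ↦ h v hv hvx,
    fun h _ hw hwx ↦ h.trans (reachable_deleteEdges_of_mem_of_mem g.2 hv hw hvx hwx)⟩

end OnSide

variable {V : Type*} [Fintype V] {G : SimpleGraph V} [DecidableRel G.Adj]

theorem adj_mk_mk {x : V} {e f : G.edgeSet} (he : x ∈ (e : Sym2 V)) (hf : x ∈ (f : Sym2 V))
    (hne : Quot.mk (edgeRel G) e ≠ Quot.mk (edgeRel G) f) :
    (contractedLineGraph G).Adj (Quot.mk _ e) (Quot.mk _ f) :=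
  (fromRel_adj _ _ _).mpr ⟨hne, Or.inl ⟨e, f, rfl, rfl, x, he, hf⟩⟩

theorem reachable_mk_mk_of_mem {x : V} {e f : G.edgeSet} (he : x ∈ (e : Sym2 V))
    (hf : x ∈ (f : Sym2 V)) : (contractedLineGraph G).Reachable (Quot.mk _ e) (Quot.mk _ f) := by
  by_cases hef : Quot.mk (edgeRel G) e = Quot.mk (edgeRel G) f
  · rw [hef]
  · exact (adj_mk_mk he hf hef).reachable

theorem reachable_mk_mk_of_walk {u w : V} (p : G.Walk u w) {e f : G.edgeSet}
    (he : u ∈ (e : Sym2 V)) (hf : w ∈ (f : Sym2 V)) :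
    (contractedLineGraph G).Reachable (Quot.mk _ e) (Quot.mk _ f) := by
  induction p generalizing e with
  | nil => exact reachable_mk_mk_of_mem he hf
  | @cons u v w huv p ih =>
    exact (reachable_mk_mk_of_mem (f := ⟨s(u, v), huv⟩) he (Sym2.mem_mk_left u v)).trans
      (ih (Sym2.mem_mk_right u v) hf)

theorem connected_contractedLineGraph (hG : G.Preconnected) [Nonempty G.edgeSet] :
    (contractedLineGraph G).Connected := by
  have : Nonempty (Quot (edgeRel G)) := .map (Quot.mk _) ‹_›
  refine .mk fun c c' ↦ ?_
  induction c using Quot.ind with | _ e => ?_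
  induction c' using Quot.ind with | _ f => ?_
  obtain ⟨p⟩ := hG (e : Sym2 V).out.1 (f : Sym2 V).out.1
  exact reachable_mk_mk_of_walk p (Sym2.out_fst_mem _) (Sym2.out_fst_mem _)

def IsEdgeThrough (x : V) (s : Sym2 (Quot (edgeRel G))) : Prop :=
  ∃ e f : G.edgeSet, e ≠ f ∧ x ∈ (e : Sym2 V) ∧ x ∈ (f : Sym2 V) ∧
    s = s(Quot.mk _ e, Quot.mk _ f)

theorem exists_isEdgeThrough {x : V} (hx : G.degree x = 2) :
    ∃ s : Sym2 (Quot (edgeRel G)), IsEdgeThrough x s := by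
  obtain ⟨e, f, hef, he, hf⟩ := exists_ne_of_degree_eq_two hx
  exact ⟨_, e, f, hef, he, hf, rfl⟩

theorem exists_isEdgeThrough_of_adj {c c' : Quot (edgeRel G)}
    (h : (contractedLineGraph G).Adj c c') : ∃ x, G.degree x = 2 ∧ IsEdgeThrough x s(c, c') := by
  obtain ⟨hne, ⟨e, f, rfl, rfl, x, he, hf⟩ | ⟨f, e, rfl, rfl, x, hf, he⟩⟩ := (fromRel_adj ..).mp h
  all_goals
    have hef : e ≠ f := by rintro rfl; exact hne rfl
    have hdeg : G.degree x ≤ 2 := not_lt.mp fun h ↦ hne (Quot.sound ⟨x, he, hf, h⟩)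
    exact ⟨x, hdeg.antisymm (two_le_degree_of_mem_of_mem he hf hef), e, f, hef, he, hf, rfl⟩

theorem IsEdgeThrough.unique {x : V} (hx : G.degree x = 2) {s t : Sym2 (Quot (edgeRel G))}
    (hs : IsEdgeThrough x s) (ht : IsEdgeThrough x t) : s = t := by
  obtain ⟨e, f, hef, he, hf, rfl⟩ := hs
  obtain ⟨g, h, hgh, hg, hh, rfl⟩ := ht
  rcases eq_or_eq_of_degree_eq_two hx he hf hef hg with rfl | rfl <;>
  rcases eq_or_eq_of_degree_eq_two hx he hf hef hh with rfl | rfl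
  all_goals first | exact absurd rfl hgh | rfl | exact Sym2.eq_swap

theorem onSide_congr {x a : V} (hx : G.degree x ≤ 2) {g h : G.edgeSet} (hgh : edgeRel G g h) :
    OnSide x a g ↔ OnSide x a h := by
  obtain ⟨v, hg, hh, hv⟩ := hgh
  have hvx : v ≠ x := by rintro rfl; omega
  rw [onSide_iff hg hvx, onSide_iff hh hvx]

def ClassOnSide (x a : V) (hx : G.degree x ≤ 2) : Quot (edgeRel G) → Prop :=
  Quot.lift (OnSide x a) fun _ _ h ↦ propext (onSide_congr hx h)

section ClassOnSide

variable {x a b : V} (hx : G.degree x ≤ 2)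

theorem classOnSide_mk_iff {v : V} {g : G.edgeSet} (hv : v ∈ (g : Sym2 V)) (hvx : v ≠ x) :
    ClassOnSide x a hx (Quot.mk _ g) ↔ (G.deleteEdges {s(x, a)}).Reachable a v :=
  onSide_iff hv hvx

theorem classOnSide_mk_left (hxa : G.Adj x a) : ClassOnSide x a hx (Quot.mk _ ⟨s(x, a), hxa⟩) :=
  (classOnSide_mk_iff hx (Sym2.mem_mk_right x a) hxa.ne').mpr .rfl

theorem not_classOnSide_mk_right (hG : G.IsAcyclic) (hxa : G.Adj x a) (hxb : G.Adj x b)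
    (hab : a ≠ b) : ¬ ClassOnSide x a hx (Quot.mk _ ⟨s(x, b), hxb⟩) := by
  rw [classOnSide_mk_iff hx (Sym2.mem_mk_right x b) hxb.ne']
  intro hreach
  have hbx : (G.deleteEdges {s(x, a)}).Adj b x := by simp [hxb.symm, hab.symm, hxb.ne']
  exact isBridge_iff.mp (isAcyclic_iff_forall_adj_isBridge.mp hG hxa)
    (hreach.trans hbx.reachable).symm

theorem classOnSide_iff_of_isEdgeThrough {y : V} (hyx : y ≠ x) {c c' : Quot (edgeRel G)}
    (hy : IsEdgeThrough y s(c, c')) : ClassOnSide x a hx c ↔ ClassOnSide x a hx c' := by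
  obtain ⟨g, h, -, hyg, hyh, hs⟩ := hy
  have hgh : ClassOnSide x a hx (Quot.mk _ g) ↔ ClassOnSide x a hx (Quot.mk _ h) := by
    rw [classOnSide_mk_iff hx hyg hyx, classOnSide_mk_iff hx hyh hyx]
  rcases Sym2.eq_iff.mp hs with ⟨rfl, rfl⟩ | ⟨rfl, rfl⟩
  exacts [hgh, hgh.symm]

end ClassOnSide

theorem IsEdgeThrough.isBridge (hG : G.IsAcyclic) {x : V} (hx : G.degree x = 2)
    {s : Sym2 (Quot (edgeRel G))} (hs : IsEdgeThrough x s) :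
    (contractedLineGraph G).IsBridge s := by
  obtain ⟨e, f, hef, he, hf, rfl⟩ := hs
  obtain ⟨a, hxa, rfl⟩ := exists_adj_eq_mk he
  obtain ⟨b, hxb, rfl⟩ := exists_adj_eq_mk hf
  rw [isBridge_iff]
  intro hreach
  refine not_classOnSide_mk_right hx.le hG hxa hxb (by rintro rfl; exact hef rfl)
    ((hreach.iff_of_forall_adj fun c c' hcc ↦ ?_).mp (classOnSide_mk_left hx.le hxa))
  rw [deleteEdges_adj, Set.mem_singleton_iff] at hcc
  obtain ⟨y, -, hy⟩ := exists_isEdgeThrough_of_adj hcc.1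
  rcases eq_or_ne y x with rfl | hyx
  · exact absurd (hy.unique hx ⟨_, _, hef, he, hf, rfl⟩) hcc.2
  · exact classOnSide_iff_of_isEdgeThrough hx.le hyx hy

theorem IsEdgeThrough.mem_edgeSet (hG : G.IsAcyclic) {x : V} (hx : G.degree x = 2)
    {s : Sym2 (Quot (edgeRel G))} (hs : IsEdgeThrough x s) :
    s ∈ (contractedLineGraph G).edgeSet := by
  have hbridge := hs.isBridge hG hx
  obtain ⟨e, f, -, he, hf, rfl⟩ := hs
  refine adj_mk_mk he hf fun h ↦ ?_
  rw [h, isBridge_iff] at hbridge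
  exact hbridge .rfl

theorem IsEdgeThrough.eq_of_isEdgeThrough (hG : G.IsAcyclic) {x y : V} (hx : G.degree x = 2)
    {s : Sym2 (Quot (edgeRel G))} (hxs : IsEdgeThrough x s) (hys : IsEdgeThrough y s) : x = y := by
  obtain ⟨e, f, hef, he, hf, rfl⟩ := hxs
  obtain ⟨a, hxa, rfl⟩ := exists_adj_eq_mk he
  obtain ⟨b, hxb, rfl⟩ := exists_adj_eq_mk hf
  by_contra hxy
  exact not_classOnSide_mk_right hx.le hG hxa hxb (by rintro rfl; exact hef rfl)
    ((classOnSide_iff_of_isEdgeThrough hx.le (Ne.symm hxy) hys).mp (classOnSide_mk_left hx.le hxa))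

theorem isAcyclic_contractedLineGraph (hG : G.IsAcyclic) : (contractedLineGraph G).IsAcyclic :=
  isAcyclic_iff_forall_adj_isBridge.mpr fun _ _ hcc ↦
    let ⟨_, hx, hs⟩ := exists_isEdgeThrough_of_adj hcc
    hs.isBridge hG hx

theorem nonempty_edgeSet_equiv_degree_eq_two (hG : G.IsAcyclic) :
    Nonempty ((contractedLineGraph G).edgeSet ≃ {v : V // G.degree v = 2}) := by
  choose φ hφ using fun x : {v : V // G.degree v = 2} ↦ exists_isEdgeThrough x.2
  let ψ : {v : V // G.degree v = 2} → (contractedLineGraph G).edgeSet :=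
    fun x ↦ ⟨φ x, (hφ x).mem_edgeSet hG x.2⟩
  have hinj : ψ.Injective := fun x y hxy ↦ by
    have hφxy : φ x = φ y := congrArg Subtype.val hxy
    exact Subtype.ext <| (hφ x).eq_of_isEdgeThrough hG x.2 (hφxy ▸ hφ y)
  have hsurj : ψ.Surjective := by
    rintro ⟨s, hs⟩
    induction s using Sym2.ind with | _ c c' => ?_
    obtain ⟨x, hx, hxs⟩ := exists_isEdgeThrough_of_adj hs
    exact ⟨⟨x, hx⟩, Subtype.ext ((hφ ⟨x, hx⟩).unique hx hxs)⟩
  exact ⟨(Equiv.ofBijective ψ ⟨hinj, hsurj⟩).symm⟩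

end ContractedLineGraph

open ContractedLineGraph in
theorem contracted_line_graph_is_tree_general {V : Type*} [Fintype V]
    (G : SimpleGraph V) [DecidableRel G.Adj] (hT : G.IsTree) (h2 : 2 ≤ Fintype.card V) :
    (contractedLineGraph G).IsTree ∧
      Nonempty ((contractedLineGraph G).edgeSet ≃ {v : V // G.degree v = 2}) := by
  have : Nontrivial V := Fintype.one_lt_card_iff_nontrivial.mp h2
  obtain ⟨v⟩ := hT.connected.nonempty
  obtain ⟨w, hvw⟩ := hT.connected.preconnected.exists_adj_of_nontrivial v
  have : Nonempty G.edgeSet := ⟨⟨s(v, w), hvw⟩⟩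
  exact ⟨⟨connected_contractedLineGraph hT.connected.preconnected,
    isAcyclic_contractedLineGraph hT.isAcyclic⟩, nonempty_edgeSet_equiv_degree_eq_two hT.isAcyclic⟩

/-- for a finite tree `G` (with at least one edge), the graph `G'` obtained from
the line graph `L(G)` by contracting every maximal clique with more than two vertices is again
a tree, and its edges are in bijection with the degree-2 vertices of `G`. -/
theorem contracted_line_graph_is_tree {V : Type*} [Fintype V] [DecidableEq V]
    (G : SimpleGraph V) [DecidableRel G.Adj] (hT : G.IsTree) (h2 : 2 ≤ Fintype.card V) :
    (contractedLineGraph G).IsTree ∧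
      Nonempty ((contractedLineGraph G).edgeSet ≃ {v : V // G.degree v = 2}) :=
  contracted_line_graph_is_tree_general G hT h2
end
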